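/- arXiv:2304.11303 — 7 statements merged into one kernel-verified Lean document; each statement's English description precedes it below -/
import Mathlib

section
/- Let V be a finite-dimensional real vector space, let μ₁ and μ₂ be inner products (positive definite symmetric bilinear forms) on V, and let Φ be a finite set of increasing filtrations of V. Assume that for each j ∈ {1,2} the family consisting of the μ_j-orthogonal splittings of the filtrations in Φ is compatible. Then there exists a linear automorphism g of V preserving every filtration in Φ (i.e. g(W_k) = W_k for every W ∈ Φ and every k ∈ ℤ) such that μ₂(x,y) = μ₁(g⁻¹x, g⁻¹y) for all x, y ∈ V. -/
/-- An *increasing filtration* of a real vector space `V`: a monotone family of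
subspaces indexed by `ℤ` which is `⊥` for all sufficiently small indices and `⊤`
for all sufficiently large indices. -/
def IsIncFiltration {V : Type*} [AddCommGroup V] [Module ℝ V]
    (W : ℤ → Submodule ℝ V) : Prop :=
  Monotone W ∧ (∃ a : ℤ, ∀ k : ℤ, k ≤ a → W k = ⊥) ∧ (∃ b : ℤ, ∀ k : ℤ, b ≤ k → W k = ⊤)

/-- The `μ`-orthogonal splitting of an increasing filtration `W`:
`s_W(k) = W_k ⊓ (W_{k-1})^{⊥_μ}`. -/
def orthSplit {V : Type*} [AddCommGroup V] [Module ℝ V]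
    (μ : LinearMap.BilinForm ℝ V) (W : ℤ → Submodule ℝ V) (k : ℤ) : Submodule ℝ V :=
  W k ⊓ μ.orthogonal (W (k - 1))

/-- A family of splittings `s i` (of filtrations indexed by `i : ι`) is *compatible*
if there is a direct sum decomposition `V = ⊕_{w ∈ ℤ^ι} V[w]`, with only finitely many
nonzero summands, such that `s i k = ⊕_{w : w i = k} V[w]` for every `i` and `k`. -/
def CompatibleFamily {V : Type*} [AddCommGroup V] [Module ℝ V] {ι : Type*}
    (s : ι → ℤ → Submodule ℝ V) : Prop :=
  ∃ D : (ι → ℤ) → Submodule ℝ V,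
    iSupIndep D ∧ iSup D = ⊤ ∧ {w : ι → ℤ | D w ≠ ⊥}.Finite ∧
    ∀ (i : ι) (k : ℤ), s i k = ⨆ w ∈ {w : ι → ℤ | w i = k}, D w


/-!
For either inner product, the compatible decomposition `V = ⊕ V[w]` is orthogonal, and by
induction on `k` it recovers the filtrations as `W_k = ⊕_{w(W) ≤ k} V[w]`. Consequently
`V[w]` is a complement of `F_{<w} = Σ_W F_{w - e_W}` in `F_w = ⋂_W W_{w(W)}`, two subspaces
built from the filtrations alone, so the blocks of the two decompositions have the same
dimensions. The automorphism sending a `μ₁`-orthonormal basis of each block `V₁[w]` to a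
`μ₂`-orthonormal basis of `V₂[w]` then maps every `W_k` onto itself and transports `μ₁` to `μ₂`.
-/

open Module

namespace DirectSum.IsInternal

variable {R M κ : Type*} [Semiring R] [AddCommMonoid M] [Module R M] [DecidableEq κ]
  {D : κ → Submodule R M}

theorem mem_biSup_iff (h : IsInternal D) {A : Set κ} {x : M} :
    x ∈ ⨆ w ∈ A, D w ↔ ∀ w ∉ A, (LinearEquiv.ofBijective (coeLinearMap D) h).symm x w = 0 := by
  classical
  set E := LinearEquiv.ofBijective (coeLinearMap D) h
  constructor
  · intro hx w hw
    have hle : ⨆ w' ∈ A, D w' ≤ LinearMap.ker ((component R κ (fun w => D w) w) ∘ₗ E.symm) :=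
      iSup₂_le fun w' hw' y hy =>
        h.ofBijective_coeLinearMap_of_mem_ne (by rintro rfl; exact hw hw') hy
    exact hle hx
  · intro hx
    rw [← E.apply_symm_apply x, ← sum_support_of (E.symm x), map_sum]
    refine Submodule.sum_mem _ fun w hw => ?_
    have hwA : w ∈ A := not_not.mp fun hwA => DFinsupp.mem_support_iff.mp hw (hx w hwA)
    exact Submodule.mem_iSup_of_mem w <| Submodule.mem_iSup_of_mem hwA <| by
      change coeLinearMap D (of _ w _) ∈ D w
      rw [coeLinearMap_of]
      exact SetLike.coe_mem _

theorem iInf_biSup_eq (h : IsInternal D) {ι : Type*} (A : ι → Set κ) :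
    ⨅ i, ⨆ w ∈ A i, D w = ⨆ w ∈ ⋂ i, A i, D w := by
  ext x
  rw [Submodule.mem_iInf, h.mem_biSup_iff]
  simp only [h.mem_biSup_iff, Set.mem_iInter, not_forall]
  exact ⟨fun hx w ⟨i, hi⟩ => hx i w hi, fun hx i w hi => hx w ⟨i, hi⟩⟩

end DirectSum.IsInternal

theorem iSupIndep.finrank_add_finrank_biSup_Iio {K M κ : Type*} [DivisionRing K]
    [AddCommGroup M] [Module K M] [FiniteDimensional K M] [PartialOrder κ]
    {D : κ → Submodule K M} (hD : iSupIndep D) (w : κ) :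
    finrank K (D w) + finrank K ↥(⨆ w' ∈ Set.Iio w, D w') =
      finrank K ↥(⨆ w' ∈ Set.Iic w, D w') := by
  have hdisj := hD.disjoint_biSup (Set.self_notMem_Iio (a := w))
  rw [← Set.Iio_insert, iSup_insert, ← Submodule.finrank_sup_add_finrank_inf_eq, hdisj.eq_bot,
    finrank_bot, add_zero]

theorem Pi.lt_iff_exists_le_update {ι : Type*} [DecidableEq ι] {v w : ι → ℤ} :
    v < w ↔ ∃ i, v ≤ Function.update w i (w i - 1) := by
  simp only [le_update_iff, Pi.lt_def, Int.le_sub_one_iff]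
  constructor
  · rintro ⟨hle, i, hi⟩
    exact ⟨i, hi, fun j _ => hle j⟩
  · rintro ⟨i, hi, hle⟩
    refine ⟨fun j => ?_, i, hi⟩
    rcases eq_or_ne j i with rfl | hj
    exacts [hi.le, hle j hj]

theorem Monotone.eq_iSup_le_of_le_sup {α : Type*} [CompleteLattice α] {W S : ℤ → α}
    (hW : Monotone W) {a : ℤ} (ha : ∀ k ≤ a, W k = ⊥) (hSW : ∀ k, S k ≤ W k)
    (hstep : ∀ k, W k ≤ W (k - 1) ⊔ S k) (k : ℤ) : W k = ⨆ j ≤ k, S j := by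
  refine le_antisymm ?_ (iSup₂_le fun j hj => (hSW j).trans (hW hj))
  rcases le_total k a with hk | hk
  · simp [ha k hk]
  induction k, hk using Int.leInduction with
  | base => simp [ha a le_rfl]
  | succ k _ ih =>
    refine (hstep (k + 1)).trans (sup_le ?_ (le_iSup₂_of_le (k + 1) le_rfl le_rfl))
    rw [add_sub_cancel_right]
    exact ih.trans (biSup_mono fun j hj => by omega)

section OrthogonalSplitting

variable {V : Type*} [AddCommGroup V] [Module ℝ V] {μ : LinearMap.BilinForm ℝ V}

theorem le_sup_orthSplit [FiniteDimensional ℝ V] (hμ : μ.IsRefl)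
    (hpos : ∀ x : V, x ≠ 0 → 0 < μ x x) {W : ℤ → Submodule ℝ V} (hW : Monotone W) (k : ℤ) :
    W k ≤ W (k - 1) ⊔ orthSplit μ W k := by
  have hdisj : Disjoint (W (k - 1)) (μ.orthogonal (W (k - 1))) := by
    refine (Submodule.disjoint_def).mpr fun x hx hx' => not_not.mp fun hne => ?_
    exact (hpos x hne).ne' (μ.mem_orthogonal_iff.mp hx' x hx)
  have hcompl := μ.isCompl_orthogonal_of_restrict_nondegenerate hμ
    (μ.nondegenerate_restrict_of_disjoint_orthogonal hμ hdisj)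
  rw [orthSplit, inf_comm, ← sup_inf_assoc_of_le _ (hW (by omega : k - 1 ≤ k)),
    hcompl.sup_eq_top, top_inf_eq]

variable {ι : Type*} {Wfam : ι → ℤ → Submodule ℝ V} {D : (ι → ℤ) → Submodule ℝ V}

theorem filtration_eq_biSup_of_orthSplit_eq [FiniteDimensional ℝ V] (hμ : μ.IsRefl)
    (hpos : ∀ x : V, x ≠ 0 → 0 < μ x x) (hfil : ∀ i, IsIncFiltration (Wfam i))
    (hs : ∀ i k, orthSplit μ (Wfam i) k = ⨆ w ∈ {w : ι → ℤ | w i = k}, D w) (i : ι) (k : ℤ) :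
    Wfam i k = ⨆ w ∈ {w : ι → ℤ | w i ≤ k}, D w := by
  obtain ⟨hmono, ⟨a, ha⟩, -⟩ := hfil i
  rw [hmono.eq_iSup_le_of_le_sup (S := orthSplit μ (Wfam i)) ha (fun _ => inf_le_left)
    (le_sup_orthSplit hμ hpos hmono) k]
  simp_rw [hs i]
  refine le_antisymm (iSup₂_le fun j hj => iSup₂_le fun w hw => ?_)
    (iSup₂_le fun w hw => le_iSup₂_of_le (w i) hw (le_biSup D rfl))
  exact le_biSup D (show w i ≤ k from (hw : w i = j) ▸ hj)

theorem orthSplit_blocks_orthogonal (hμ : μ.IsRefl) (hmono : ∀ i, Monotone (Wfam i))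
    (hs : ∀ i k, orthSplit μ (Wfam i) k = ⨆ w ∈ {w : ι → ℤ | w i = k}, D w)
    (w w' : ι → ℤ) (hne : w ≠ w') (x : V) (hx : x ∈ D w) (y : V) (hy : y ∈ D w') :
    μ x y = 0 := by
  have hD : ∀ w i, D w ≤ orthSplit μ (Wfam i) (w i) := fun w i => by
    rw [hs]
    exact le_biSup D rfl
  -- if `w i < w' i` then `D w ≤ W_i (w i) ≤ W_i (w' i - 1)`, to which `D w'` is orthogonal
  have key : ∀ {w w' : ι → ℤ} (i : ι), w i < w' i → ∀ x ∈ D w, ∀ y ∈ D w', μ x y = 0 :=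
    fun i hlt x hx y hy => μ.mem_orthogonal_iff.mp (hD _ i hy).2 x
      (hmono i (Int.le_sub_one_of_lt hlt) (hD _ i hx).1)
  obtain ⟨i, hi⟩ := Function.ne_iff.mp hne
  rcases hi.lt_or_gt with hlt | hlt
  exacts [key i hlt x hx y hy, hμ y x (key i hlt y hy x hx)]

end OrthogonalSplitting

section BlockDimension

variable {K V ι : Type*} [DivisionRing K] [AddCommGroup V] [Module K V]
  {Wfam : ι → ℤ → Submodule K V} {D : (ι → ℤ) → Submodule K V}

theorem iInf_filtration_eq_biSup_Iic [DecidableEq (ι → ℤ)] (hD : DirectSum.IsInternal D)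
    (hW : ∀ i k, Wfam i k = ⨆ w ∈ {w : ι → ℤ | w i ≤ k}, D w) (w : ι → ℤ) :
    ⨅ i, Wfam i (w i) = ⨆ w' ∈ Set.Iic w, D w' := by
  simp_rw [hW, hD.iInf_biSup_eq]
  congr! 2
  ext w'
  simp [Pi.le_def]

theorem iSup_iInf_filtration_update_eq_biSup_Iio [DecidableEq ι] [DecidableEq (ι → ℤ)]
    (hD : DirectSum.IsInternal D)
    (hW : ∀ i k, Wfam i k = ⨆ w ∈ {w : ι → ℤ | w i ≤ k}, D w) (w : ι → ℤ) :
    ⨆ i, ⨅ j, Wfam j (Function.update w i (w i - 1) j) = ⨆ w' ∈ Set.Iio w, D w' := by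
  simp_rw [iInf_filtration_eq_biSup_Iic hD hW, ← iSup_iUnion]
  congr! 2
  ext w'
  simp [Pi.lt_iff_exists_le_update]

theorem finrank_eq_of_filtration_eq_biSup [FiniteDimensional K V] [DecidableEq ι]
    [DecidableEq (ι → ℤ)] {D₁ D₂ : (ι → ℤ) → Submodule K V}
    (h₁ : DirectSum.IsInternal D₁) (h₂ : DirectSum.IsInternal D₂)
    (hW₁ : ∀ i k, Wfam i k = ⨆ w ∈ {w : ι → ℤ | w i ≤ k}, D₁ w)
    (hW₂ : ∀ i k, Wfam i k = ⨆ w ∈ {w : ι → ℤ | w i ≤ k}, D₂ w) (w : ι → ℤ) :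
    finrank K (D₁ w) = finrank K (D₂ w) := by
  have e₁ := h₁.submodule_iSupIndep.finrank_add_finrank_biSup_Iio w
  have e₂ := h₂.submodule_iSupIndep.finrank_add_finrank_biSup_Iio w
  rw [← iInf_filtration_eq_biSup_Iic h₁ hW₁, ← iSup_iInf_filtration_update_eq_biSup_Iio h₁ hW₁]
    at e₁
  rw [← iInf_filtration_eq_biSup_Iic h₂ hW₂, ← iSup_iInf_filtration_update_eq_biSup_Iio h₂ hW₂]
    at e₂
  omega

end BlockDimension

namespace LinearMap.BilinForm

variable {R M M' ι : Type*} [CommRing R] [AddCommGroup M] [Module R M] [AddCommGroup M']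
  [Module R M']

def IsOrthonormal (B : LinearMap.BilinForm R M) (v : ι → M) : Prop :=
  B.IsOrthoᵢ v ∧ ∀ i, B (v i) (v i) = 1

theorem IsOrthonormal.apply_basisEquiv {B₁ : LinearMap.BilinForm R M}
    {B₂ : LinearMap.BilinForm R M'}
    {b₁ : Basis ι R M} {b₂ : Basis ι R M'} (h₁ : B₁.IsOrthonormal b₁)
    (h₂ : B₂.IsOrthonormal b₂) (x y : M) :
    B₂ (b₁.equiv b₂ (.refl ι) x) (b₁.equiv b₂ (.refl ι) y) = B₁ x y := by
  have hform : B₂.compl₁₂ (b₁.equiv b₂ (.refl ι)).toLinearMap (b₁.equiv b₂ (.refl ι)).toLinearMap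
      = B₁ := by
    refine LinearMap.ext_basis b₁ b₁ fun i j => ?_
    simp only [compl₁₂_apply, LinearEquiv.coe_coe, Basis.equiv_apply, Equiv.refl_apply]
    rcases eq_or_ne i j with rfl | hij
    · rw [h₁.2, h₂.2]
    · rw [h₁.1 hij, h₂.1 hij]
  exact LinearMap.congr_fun₂ hform x y

theorem exists_basis_isOrthonormal {M : Type*} [AddCommGroup M] [Module ℝ M]
    [FiniteDimensional ℝ M] {B : LinearMap.BilinForm ℝ M}
    (hsymm : ∀ x y, B x y = B y x) (hpos : ∀ x : M, x ≠ 0 → 0 < B x x) {n : ℕ}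
    (hn : finrank ℝ M = n) : ∃ v : Basis (Fin n) ℝ M, B.IsOrthonormal v := by
  subst hn
  obtain ⟨v, hv⟩ := exists_orthogonal_basis (isSymm_iff.mp ⟨hsymm⟩)
  have hvpos : ∀ i, 0 < B (v i) (v i) := fun i => hpos _ (v.ne_zero i)
  have hunit : ∀ i, IsUnit (√(B (v i) (v i)))⁻¹ := fun i =>
    (inv_pos.mpr (Real.sqrt_pos.mpr (hvpos i))).ne'.isUnit
  refine ⟨v.isUnitSMul hunit, fun i j hij => ?_, fun i => ?_⟩
  · have hvij : B (v i) (v j) = 0 := hv hij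
    simp only [Function.onFun, Basis.isUnitSMul_apply, map_smul, smul_apply, smul_eq_mul, hvij,
      mul_zero]
  · simp only [Basis.isUnitSMul_apply, map_smul, smul_apply, smul_eq_mul]
    rw [← mul_assoc, ← mul_inv, Real.mul_self_sqrt (hvpos i).le, inv_mul_cancel₀ (hvpos i).ne']

end LinearMap.BilinForm

namespace DirectSum.IsInternal

variable {R M κ : Type*} [CommRing R] [AddCommGroup M] [Module R M] [DecidableEq κ]
  {α : κ → Type*}

theorem isOrthonormal_collectedBasis {D : κ → Submodule R M} (h : IsInternal D)
    {v : ∀ w, Basis (α w) R (D w)} {B : LinearMap.BilinForm R M}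
    (hD : ∀ w w', w ≠ w' → ∀ x ∈ D w, ∀ y ∈ D w', B x y = 0)
    (hv : ∀ w, B.IsOrthonormal fun a => (v w a : M)) :
    B.IsOrthonormal (h.collectedBasis v) := by
  refine ⟨?_, fun ⟨w, a⟩ => by simpa using (hv w).2 a⟩
  rintro ⟨w, a⟩ ⟨w', b⟩ hne
  rcases eq_or_ne w w' with rfl | hw
  · have hab : a ≠ b := fun hab => hne (hab ▸ rfl)
    simpa using (hv w).1 hab
  · exact hD w w' hw _ (h.collectedBasis_mem v ⟨w, a⟩) _ (h.collectedBasis_mem v ⟨w', b⟩)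

theorem map_collectedBasis_equiv {D₁ D₂ : κ → Submodule R M} (h₁ : IsInternal D₁)
    (h₂ : IsInternal D₂) (v₁ : ∀ w, Basis (α w) R (D₁ w)) (v₂ : ∀ w, Basis (α w) R (D₂ w))
    (w : κ) :
    (D₁ w).map ((h₁.collectedBasis v₁).equiv (h₂.collectedBasis v₂) (.refl _) : M →ₗ[R] M) =
      D₂ w := by
  have hspan : ∀ {N : Submodule R M} (b : Basis (α w) R N),
      Submodule.span R (Set.range fun a => (b a : M)) = N := fun {N} b => by
    rw [show (fun a => (b a : M)) = N.subtype ∘ b from rfl, Set.range_comp,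
      Submodule.span_image, b.span_eq, Submodule.map_subtype_top]
  rw [← hspan (v₁ w), ← hspan (v₂ w), Submodule.map_span, ← Set.range_comp]
  congr 2
  funext a
  have hv₁ : (v₁ w a : M) = h₁.collectedBasis v₁ ⟨w, a⟩ := by simp
  have hv₂ : (v₂ w a : M) = h₂.collectedBasis v₂ ⟨w, a⟩ := by simp
  simp only [Function.comp_apply, LinearEquiv.coe_coe]
  rw [hv₁, hv₂, Basis.equiv_apply, Equiv.refl_apply]

end DirectSum.IsInternal

theorem exists_linearEquiv_map_eq_isometry_of_finrank_eq {V κ : Type*} [AddCommGroup V]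
    [Module ℝ V] [FiniteDimensional ℝ V] [DecidableEq κ] {D₁ D₂ : κ → Submodule ℝ V}
    (h₁ : DirectSum.IsInternal D₁) (h₂ : DirectSum.IsInternal D₂)
    (hdim : ∀ w, finrank ℝ (D₁ w) = finrank ℝ (D₂ w)) {μ₁ μ₂ : LinearMap.BilinForm ℝ V}
    (hμ₁symm : ∀ x y, μ₁ x y = μ₁ y x) (hμ₁pos : ∀ x : V, x ≠ 0 → 0 < μ₁ x x)
    (hμ₂symm : ∀ x y, μ₂ x y = μ₂ y x) (hμ₂pos : ∀ x : V, x ≠ 0 → 0 < μ₂ x x)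
    (hD₁ : ∀ w w', w ≠ w' → ∀ x ∈ D₁ w, ∀ y ∈ D₁ w', μ₁ x y = 0)
    (hD₂ : ∀ w w', w ≠ w' → ∀ x ∈ D₂ w, ∀ y ∈ D₂ w', μ₂ x y = 0) :
    ∃ g : V ≃ₗ[ℝ] V, (∀ w, (D₁ w).map (g : V →ₗ[ℝ] V) = D₂ w) ∧
      ∀ x y, μ₂ (g x) (g y) = μ₁ x y := by
  have hbasis : ∀ (D : Submodule ℝ V) {μ : LinearMap.BilinForm ℝ V},
      (∀ x y, μ x y = μ y x) → (∀ x : V, x ≠ 0 → 0 < μ x x) → ∀ {n}, finrank ℝ D = n →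
      ∃ v : Basis (Fin n) ℝ D, μ.IsOrthonormal fun a => (v a : V) :=
    fun D μ hsymm hpos n hn => LinearMap.BilinForm.exists_basis_isOrthonormal
      (B := μ.restrict D) (fun x y => hsymm x y) (fun x hx => hpos x (by simpa using hx)) hn
  choose v₁ hv₁ using fun w => hbasis (D₁ w) hμ₁symm hμ₁pos rfl
  choose v₂ hv₂ using fun w => hbasis (D₂ w) hμ₂symm hμ₂pos (hdim w).symm
  exact ⟨_, h₁.map_collectedBasis_equiv h₂ v₁ v₂,
    (h₁.isOrthonormal_collectedBasis hD₁ hv₁).apply_basisEquiv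
      (h₂.isOrthonormal_collectedBasis hD₂ hv₂)⟩

theorem exists_automorphism_transporting_inner_product_general
    {V : Type*} [AddCommGroup V] [Module ℝ V] [FiniteDimensional ℝ V]
    (μ₁ μ₂ : LinearMap.BilinForm ℝ V)
    (hμ₁symm : ∀ x y : V, μ₁ x y = μ₁ y x) (hμ₁pos : ∀ x : V, x ≠ 0 → 0 < μ₁ x x)
    (hμ₂symm : ∀ x y : V, μ₂ x y = μ₂ y x) (hμ₂pos : ∀ x : V, x ≠ 0 → 0 < μ₂ x x)
    (Φ : Set (ℤ → Submodule ℝ V))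
    (hΦfil : ∀ W ∈ Φ, IsIncFiltration W)
    (h₁ : CompatibleFamily (fun W : Φ => orthSplit μ₁ W.1))
    (h₂ : CompatibleFamily (fun W : Φ => orthSplit μ₂ W.1)) :
    ∃ g : V ≃ₗ[ℝ] V,
      (∀ W ∈ Φ, ∀ k : ℤ, Submodule.map (g : V →ₗ[ℝ] V) (W k) = W k) ∧
      ∀ x y : V, μ₂ x y = μ₁ (g.symm x) (g.symm y) := by
  classical
  obtain ⟨D₁, hD₁ind, hD₁top, -, hs₁⟩ := h₁
  obtain ⟨D₂, hD₂ind, hD₂top, -, hs₂⟩ := h₂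
  have hI₁ := DirectSum.isInternal_submodule_of_iSupIndep_of_iSup_eq_top hD₁ind hD₁top
  have hI₂ := DirectSum.isInternal_submodule_of_iSupIndep_of_iSup_eq_top hD₂ind hD₂top
  have hrefl₁ : μ₁.IsRefl := fun x y h => (hμ₁symm y x).trans h
  have hrefl₂ : μ₂.IsRefl := fun x y h => (hμ₂symm y x).trans h
  have hfil : ∀ W : Φ, IsIncFiltration W.1 := fun W => hΦfil W W.2
  have hW₁ := filtration_eq_biSup_of_orthSplit_eq hrefl₁ hμ₁pos hfil hs₁
  have hW₂ := filtration_eq_biSup_of_orthSplit_eq hrefl₂ hμ₂pos hfil hs₂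
  obtain ⟨g, hgD, hgμ⟩ := exists_linearEquiv_map_eq_isometry_of_finrank_eq hI₁ hI₂
    (finrank_eq_of_filtration_eq_biSup hI₁ hI₂ hW₁ hW₂) hμ₁symm hμ₁pos hμ₂symm hμ₂pos
    (orthSplit_blocks_orthogonal hrefl₁ (fun W => (hfil W).1) hs₁)
    (orthSplit_blocks_orthogonal hrefl₂ (fun W => (hfil W).1) hs₂)
  refine ⟨g, fun W hW k => ?_, fun x y => by
    rw [← hgμ, g.apply_symm_apply, g.apply_symm_apply]⟩
  conv_lhs => rw [show W k = _ from hW₁ ⟨W, hW⟩ k]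
  simp_rw [Submodule.map_iSup, hgD]
  exact (hW₂ ⟨W, hW⟩ k).symm

/-- If two inner products `μ₁`, `μ₂` on a finite-dimensional real vector space both give
compatible orthogonal splittings of a finite set `Φ` of increasing filtrations, then
`μ₂ = g μ₁` for some automorphism `g` preserving all filtrations in `Φ`. -/
theorem exists_automorphism_transporting_inner_product
    {V : Type*} [AddCommGroup V] [Module ℝ V] [FiniteDimensional ℝ V]
    (μ₁ μ₂ : LinearMap.BilinForm ℝ V)
    (hμ₁symm : ∀ x y : V, μ₁ x y = μ₁ y x) (hμ₁pos : ∀ x : V, x ≠ 0 → 0 < μ₁ x x)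
    (hμ₂symm : ∀ x y : V, μ₂ x y = μ₂ y x) (hμ₂pos : ∀ x : V, x ≠ 0 → 0 < μ₂ x x)
    (Φ : Set (ℤ → Submodule ℝ V)) (hΦfin : Φ.Finite)
    (hΦfil : ∀ W ∈ Φ, IsIncFiltration W)
    (h₁ : CompatibleFamily (fun W : Φ => orthSplit μ₁ W.1))
    (h₂ : CompatibleFamily (fun W : Φ => orthSplit μ₂ W.1)) :
    ∃ g : V ≃ₗ[ℝ] V,
      (∀ W ∈ Φ, ∀ k : ℤ, Submodule.map (g : V →ₗ[ℝ] V) (W k) = W k) ∧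
      ∀ x y : V, μ₂ x y = μ₁ (g.symm x) (g.symm y) :=
  exists_automorphism_transporting_inner_product_general μ₁ μ₂ hμ₁symm hμ₁pos hμ₂symm hμ₂pos Φ hΦfil
    h₁ h₂
end

section
/- Let V be a finite-dimensional real vector space, let μ be an inner product on V, let Φ' be a finite set of increasing filtrations of V which has a compatible splitting, and let Φ be a subset of Φ'. Assume that the family consisting of the μ-orthogonal splittings of the filtrations in Φ is compatible. Then there exists a linear automorphism g of V with g(W_k) = W_k for every W ∈ Φ and every k ∈ ℤ, such that the family consisting of the μ-orthogonal splittings of the filtrations gW' for W' ∈ Φ' (where (gW')_k := g(W'_k)) is compatible. -/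
/-- `s` is a splitting of the increasing filtration `W`: the subspaces `s k` are
independent and `W k = ⊕_{j ≤ k} s j` for every `k`. -/
def IsSplitting {V : Type*} [AddCommGroup V] [Module ℝ V]
    (W : ℤ → Submodule ℝ V) (s : ℤ → Submodule ℝ V) : Prop :=
  iSupIndep s ∧ ∀ k : ℤ, W k = ⨆ j ∈ {j : ℤ | j ≤ k}, s j

/-!
Grouping the pieces `D w` of a compatible decomposition for `Φ'` according to the restriction
`w|Φ` of their index gives a decomposition `E` adapted to every filtration in `Φ`; so is the
decomposition `U` refining the orthogonal splittings of the members of `Φ`. In a decomposition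
adapted to finitely many filtrations, the piece of index `v` is a complement of `⨆ v' < v` in
`⨆ v' ≤ v`, and both sums are determined by the filtrations (`⨆ v' ≤ v` is an intersection of
filtration steps); hence `dim E v = dim U v`. Gram–Schmidt inside each `U v` then yields mutually
orthogonal subspaces `T w`, `w|Φ = v`, with `dim T w = dim D w`, and an automorphism `g` with
`g (D w) = T w` fixes the filtrations in `Φ`. Since the `T w` are mutually orthogonal, the
orthogonal splittings of the filtrations `g W'` are read off from them, so they are compatible.
-/

open Module Function

section Lattice

variable {α : Type*} [CompleteLattice α]

theorem biSup_preimage {β γ : Type*} (X : β → α) (r : β → γ) (A : Set γ) :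
    ⨆ b ∈ r ⁻¹' A, X b = ⨆ c ∈ A, ⨆ b ∈ r ⁻¹' {c}, X b :=
  le_antisymm
    (iSup₂_le fun b hb => (le_biSup X (show b ∈ r ⁻¹' {r b} from rfl)).trans
      (le_biSup (fun c => ⨆ b ∈ r ⁻¹' {c}, X b) hb))
    (iSup₂_le fun c hc => iSup₂_le fun b (hb : r b = c) => le_biSup X (show r b ∈ A from hb ▸ hc))

theorem iSup_update_eq_sup {κ : Type*} [DecidableEq κ] (f : κ → α) (a : κ) (x : α) :
    ⨆ j, update f a x j = x ⊔ ⨆ (j) (_ : j ≠ a), f j := by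
  rw [iSup_split_single _ a, update_self]
  congr 1
  exact iSup_congr fun j => iSup_congr fun hj => update_of_ne hj _ _

end Lattice

section IndependentFamilies

variable {α ι : Type*} [CompleteLattice α] [IsModularLattice α] [IsCompactlyGenerated α]
  {X : ι → α}

theorem iSupIndep.biSup_inf_biSup (hX : iSupIndep X) (A B : Set ι) :
    (⨆ i ∈ A, X i) ⊓ (⨆ i ∈ B, X i) = ⨆ i ∈ A ∩ B, X i := by
  have hle : ⨆ i ∈ A ∩ B, X i ≤ ⨆ i ∈ B, X i := biSup_mono fun _ => And.right
  refine le_antisymm ?_ (le_inf (biSup_mono fun _ => And.left) hle)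
  have hdisj : Disjoint (⨆ i ∈ A \ B, X i) (⨆ i ∈ B, X i) :=
    hX.disjoint_biSup_biSup Set.disjoint_sdiff_left
  conv_lhs => rw [← Set.inter_union_sdiff A B, iSup_union]
  rw [sup_inf_assoc_of_le _ hle, hdisj.eq_bot, sup_bot_eq]

theorem iSupIndep.iInf_biSup {κ : Type*} [Finite κ] (hX : iSupIndep X) (htop : iSup X = ⊤)
    (A : κ → Set ι) : ⨅ j, ⨆ i ∈ A j, X i = ⨆ i ∈ ⋂ j, A j, X i := by
  classical
  have key (s : Finset κ) : ⨅ j ∈ s, ⨆ i ∈ A j, X i = ⨆ i ∈ ⋂ j ∈ s, A j, X i := by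
    induction s using Finset.induction_on with
    | empty => simp [htop]
    | insert j s _ ih =>
      rw [Finset.iInf_insert, ih, hX.biSup_inf_biSup, Finset.set_biInter_insert]
  cases nonempty_fintype κ
  simpa using key Finset.univ

end IndependentFamilies

section Grading

variable {α : Type*} [CompleteLattice α] {ι ι' : Type*}

def gradedFiltration (X : (ι → ℤ) → α) (i : ι) (k : ℤ) : α :=
  ⨆ w ∈ {w : ι → ℤ | w i ≤ k}, X w

def coarsen (X : (ι' → ℤ) → α) (f : ι → ι') (v : ι → ℤ) : α :=
  ⨆ w ∈ {w : ι' → ℤ | w ∘ f = v}, X w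

theorem eq_gradedFiltration_of_biSup {W s : ℤ → α} {X : (ι → ℤ) → α} {i : ι}
    (hW : ∀ k, W k = ⨆ j ∈ {j : ℤ | j ≤ k}, s j)
    (hs : ∀ k, s k = ⨆ w ∈ {w : ι → ℤ | w i = k}, X w) : W = gradedFiltration X i := by
  funext k
  rw [hW]
  simp_rw [hs]
  exact (biSup_preimage X (· i) {j | j ≤ k}).symm

theorem gradedFiltration_coarsen (X : (ι' → ℤ) → α) (f : ι → ι') (i : ι) :
    gradedFiltration (coarsen X f) i = gradedFiltration X (f i) :=
  funext fun k => (biSup_preimage X (· ∘ f) {v | v i ≤ k}).symm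

theorem iSup_coarsen (X : (ι' → ℤ) → α) (f : ι → ι') : ⨆ v, coarsen X f v = ⨆ w, X w :=
  le_antisymm (iSup_le fun _ => iSup₂_le fun w _ => le_iSup X w)
    (iSup_le fun w => (le_biSup X (show w ∈ {w' | w' ∘ f = w ∘ f} from rfl)).trans
      (le_iSup (coarsen X f) (w ∘ f)))

theorem iSupIndep.coarsen [IsModularLattice α] [IsCompactlyGenerated α] {X : (ι' → ℤ) → α}
    (hX : iSupIndep X) (f : ι → ι') : iSupIndep (coarsen X f) := fun v =>
  (hX.disjoint_biSup_biSup (s := {w | w ∘ f = v}) (t := {w | w ∘ f ≠ v})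
    (Set.disjoint_left.mpr fun _ h h' => h' h)).mono_right
    (iSup₂_le fun _ hv' => iSup₂_le fun w (hw : w ∘ f = _) =>
      le_biSup X (show w ∘ f ≠ v from fun h => hv' (hw ▸ h)))

theorem biSup_Iic_eq_iInf_gradedFiltration [IsModularLattice α] [IsCompactlyGenerated α]
    [Finite ι] {X : (ι → ℤ) → α} (hX : iSupIndep X) (htop : iSup X = ⊤) (v : ι → ℤ) :
    ⨆ w ∈ Set.Iic v, X w = ⨅ i, gradedFiltration X i (v i) := by
  unfold gradedFiltration
  rw [hX.iInf_biSup htop]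
  congr
  ext w
  simp [Pi.le_def]

end Grading

section Dimension

variable {K V : Type*} [DivisionRing K] [AddCommGroup V] [Module K V] [FiniteDimensional K V]

theorem Submodule.finrank_sup_of_disjoint {N M : Submodule K V} (h : Disjoint N M) :
    finrank K ↥(N ⊔ M) = finrank K N + finrank K M := by
  have := Submodule.finrank_sup_add_finrank_inf_eq N M
  rwa [h.eq_bot, finrank_bot, add_zero] at this

theorem finrank_eq_of_biSup_Iic_eq {β : Type*} [PartialOrder β] {P Q : β → Submodule K V}
    (hP : iSupIndep P) (hQ : iSupIndep Q)
    (h : ∀ a, ⨆ b ∈ Set.Iic a, P b = ⨆ b ∈ Set.Iic a, Q b) (a : β) :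
    finrank K (P a) = finrank K (Q a) := by
  let L (b : β) := ⨆ c ∈ Set.Iic b, P c
  have key (X : β → Submodule K V) (hX : iSupIndep X) (hXL : ∀ b, L b = ⨆ c ∈ Set.Iic b, X c) :
      finrank K (X a) + finrank K ↥(⨆ b ∈ Set.Iio a, L b) = finrank K (L a) := by
    have hlower : ⨆ b ∈ Set.Iio a, L b = ⨆ b ∈ Set.Iio a, X b := by
      simp_rw [hXL]
      exact le_antisymm (iSup₂_le fun b hb => biSup_mono fun c hc => lt_of_le_of_lt hc hb)
        (iSup₂_mono fun b _ => le_biSup X (Set.mem_Iic.mpr le_rfl))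
    rw [hlower, hXL, ← Set.Iio_insert, iSup_insert,
      Submodule.finrank_sup_of_disjoint (hX.disjoint_biSup (y := Set.Iio a) (lt_irrefl a))]
  have hPa := key P hP fun _ => rfl
  have hQa := key Q hQ h
  omega

theorem finrank_eq_of_gradedFiltration_eq {ι : Type*} [Finite ι] {P Q : (ι → ℤ) → Submodule K V}
    (hP : iSupIndep P) (hPtop : iSup P = ⊤) (hQ : iSupIndep Q) (hQtop : iSup Q = ⊤)
    (h : ∀ i, gradedFiltration P i = gradedFiltration Q i) (v : ι → ℤ) :
    finrank K (P v) = finrank K (Q v) :=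
  finrank_eq_of_biSup_Iic_eq hP hQ (fun u => by
    rw [biSup_Iic_eq_iInf_gradedFiltration hP hPtop, biSup_Iic_eq_iInf_gradedFiltration hQ hQtop]
    simp only [h]) v

theorem exists_linearEquiv_map_eq {κ : Type*} [DecidableEq κ] {D T : κ → Submodule K V}
    (hD : DirectSum.IsInternal D) (hT : DirectSum.IsInternal T)
    (h : ∀ w, finrank K (D w) = finrank K (T w)) :
    ∃ g : V ≃ₗ[K] V, ∀ w, (D w).map (g : V →ₗ[K] V) = T w := by
  let e (w : κ) : D w ≃ₗ[K] T w := LinearEquiv.ofFinrankEq _ _ (h w)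
  let g : V ≃ₗ[K] V := (LinearEquiv.ofBijective (DirectSum.coeLinearMap D) hD).symm ≪≫ₗ
    DFinsupp.mapRange.linearEquiv e ≪≫ₗ LinearEquiv.ofBijective (DirectSum.coeLinearMap T) hT
  have hg (w : κ) (x : D w) : g x = e w x := by
    have hx := LinearEquiv.ofBijective_symm_apply_apply (DirectSum.coeLinearMap D) (h := hD)
      (DirectSum.of (fun w => D w) w x)
    rw [DirectSum.coeLinearMap_of] at hx
    simp only [g, LinearEquiv.trans_apply, hx]
    exact (congrArg (DirectSum.coeLinearMap T)
      (DFinsupp.mapRange_single (hf := fun i => map_zero (e i)))).trans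
      (DirectSum.coeLinearMap_of T w (e w x))
  refine ⟨g, fun w => Submodule.eq_of_le_of_finrank_eq ?_ ?_⟩
  · rintro _ ⟨x, hx, rfl⟩
    exact (hg w ⟨x, hx⟩).symm ▸ (e w ⟨x, hx⟩).2
  · rw [LinearEquiv.finrank_map_eq, h]

end Dimension

namespace LinearMap.BilinForm

variable {V : Type*} [AddCommGroup V] [Module ℝ V] {μ : LinearMap.BilinForm ℝ V}

theorem disjoint_orthogonal_of_pos (hμpos : ∀ x : V, x ≠ 0 → 0 < μ x x)
    (N : Submodule ℝ V) : Disjoint N (μ.orthogonal N) := by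
  refine Submodule.disjoint_def.mpr fun x hx hxo => ?_
  by_contra h0
  exact (hμpos x h0).ne' (hxo x hx)

theorem le_orthogonal_comm (hμsymm : ∀ x y : V, μ x y = μ y x) {N M : Submodule ℝ V} :
    N ≤ μ.orthogonal M ↔ M ≤ μ.orthogonal N :=
  ⟨fun h m hm n hn => hμsymm n m ▸ h hn m hm, fun h n hn m hm => hμsymm m n ▸ h hm n hn⟩

theorem isCompl_orthogonal_of_pos [FiniteDimensional ℝ V] (hμsymm : ∀ x y : V, μ x y = μ y x)
    (hμpos : ∀ x : V, x ≠ 0 → 0 < μ x x) (N : Submodule ℝ V) : IsCompl N (μ.orthogonal N) :=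
  (isCompl_orthogonal_iff_disjoint fun x y h => hμsymm x y ▸ h).mpr
    (disjoint_orthogonal_of_pos hμpos N)

theorem sup_inf_orthogonal_of_le [FiniteDimensional ℝ V] (hμsymm : ∀ x y : V, μ x y = μ y x)
    (hμpos : ∀ x : V, x ≠ 0 → 0 < μ x x) {N M : Submodule ℝ V} (h : N ≤ M) :
    N ⊔ M ⊓ μ.orthogonal N = M := by
  rw [inf_comm, ← sup_inf_assoc_of_le _ h, (isCompl_orthogonal_of_pos hμsymm hμpos N).sup_eq_top,
    top_inf_eq]

theorem sup_inf_orthogonal_eq_of_le (hμpos : ∀ x : V, x ≠ 0 → 0 < μ x x)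
    {N X : Submodule ℝ V} (hX : X ≤ μ.orthogonal N) : (N ⊔ X) ⊓ μ.orthogonal N = X := by
  rw [sup_comm, sup_inf_assoc_of_le _ hX, (disjoint_orthogonal_of_pos hμpos N).eq_bot,
    sup_bot_eq]

theorem iSupIndep_of_pairwise_le_orthogonal (hμpos : ∀ x : V, x ≠ 0 → 0 < μ x x)
    {κ : Type*} {T : κ → Submodule ℝ V} (hT : Pairwise fun i j => T i ≤ μ.orthogonal (T j)) :
    iSupIndep T := fun i =>
  (disjoint_orthogonal_of_pos hμpos (T i)).mono_right (iSup₂_le fun _ hj => hT hj)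

end LinearMap.BilinForm

section OrthogonalSplitting

open LinearMap.BilinForm

variable {V : Type*} [AddCommGroup V] [Module ℝ V] {μ : LinearMap.BilinForm ℝ V}

theorem IsIncFiltration.eq_biSup_orthSplit [FiniteDimensional ℝ V]
    (hμsymm : ∀ x y : V, μ x y = μ y x) (hμpos : ∀ x : V, x ≠ 0 → 0 < μ x x)
    {W : ℤ → Submodule ℝ V} (hW : IsIncFiltration W) (k : ℤ) :
    W k = ⨆ j ∈ {j : ℤ | j ≤ k}, orthSplit μ W j := by
  obtain ⟨hmono, ⟨a, ha⟩, -⟩ := hW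
  refine le_antisymm ?_ (iSup₂_le fun j hj => inf_le_left.trans (hmono hj))
  rcases le_or_gt a k with hak | hka
  · induction k, hak using Int.leInduction with
    | base => simp [ha a le_rfl]
    | succ n _ ih =>
      have hstep : W n ⊔ orthSplit μ W (n + 1) = W (n + 1) := by
        simpa [orthSplit] using
          sup_inf_orthogonal_of_le hμsymm hμpos (hmono (Int.le_add_one le_rfl))
      rw [← hstep]
      exact sup_le (ih.trans (biSup_mono fun j (hj : j ≤ n) => (by omega : j ≤ n + 1)))
        (le_biSup (orthSplit μ W) (le_refl (n + 1)))
  · simp [ha k hka.le]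

theorem pairwise_le_orthogonal_of_orthSplit_eq (hμsymm : ∀ x y : V, μ x y = μ y x) {ι : Type*}
    {F : ι → ℤ → Submodule ℝ V} (hF : ∀ i, Monotone (F i)) {U : (ι → ℤ) → Submodule ℝ V}
    (hU : ∀ i k, orthSplit μ (F i) k = ⨆ v ∈ {v : ι → ℤ | v i = k}, U v) :
    Pairwise fun v v' => U v ≤ μ.orthogonal (U v') := by
  have hUle (v : ι → ℤ) (i : ι) : U v ≤ orthSplit μ (F i) (v i) :=
    (le_biSup U (show v ∈ {v' : ι → ℤ | v' i = v i} from rfl)).trans (hU i (v i)).ge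
  have key (v v' : ι → ℤ) (i : ι) (hlt : v' i < v i) : U v ≤ μ.orthogonal (U v') :=
    (hUle v i).trans <| inf_le_right.trans <| orthogonal_le <|
      (hUle v' i).trans <| inf_le_left.trans <| hF i (by omega)
  intro v v' hne
  obtain ⟨i, hi⟩ := Function.ne_iff.mp hne
  rcases hi.lt_or_gt with hlt | hlt
  · exact (le_orthogonal_comm hμsymm).mp (key v' v i hlt)
  · exact key v v' i hlt

theorem orthSplit_gradedFiltration (hμsymm : ∀ x y : V, μ x y = μ y x)
    (hμpos : ∀ x : V, x ≠ 0 → 0 < μ x x) {ι : Type*} {T : (ι → ℤ) → Submodule ℝ V}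
    (hT : Pairwise fun w w' => T w ≤ μ.orthogonal (T w')) (i : ι) (k : ℤ) :
    orthSplit μ (gradedFiltration T i) k = ⨆ w ∈ {w : ι → ℤ | w i = k}, T w := by
  have hsplit : gradedFiltration T i k
      = gradedFiltration T i (k - 1) ⊔ ⨆ w ∈ {w : ι → ℤ | w i = k}, T w := by
    have hset : {w : ι → ℤ | w i ≤ k} = {w | w i ≤ k - 1} ∪ {w | w i = k} := by
      ext w
      simp only [Set.mem_union, Set.mem_ofPred]
      omega
    rw [gradedFiltration, gradedFiltration, hset, iSup_union]
  have horth : ⨆ w ∈ {w : ι → ℤ | w i = k}, T w ≤ μ.orthogonal (gradedFiltration T i (k - 1)) :=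
    iSup₂_le fun w (hw : w i = k) => (le_orthogonal_comm hμsymm).mp <|
      iSup₂_le fun w' (hw' : w' i ≤ k - 1) => hT fun h => by subst h; omega
  rw [orthSplit, hsplit]
  exact sup_inf_orthogonal_eq_of_le hμpos horth

theorem compatibleFamily_orthSplit_gradedFiltration (hμsymm : ∀ x y : V, μ x y = μ y x)
    (hμpos : ∀ x : V, x ≠ 0 → 0 < μ x x) {ι : Type*} {T : (ι → ℤ) → Submodule ℝ V}
    (hT : Pairwise fun w w' => T w ≤ μ.orthogonal (T w')) (htop : iSup T = ⊤)
    (hfin : {w | T w ≠ ⊥}.Finite) :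
    CompatibleFamily fun i => orthSplit μ (gradedFiltration T i) :=
  ⟨T, iSupIndep_of_pairwise_le_orthogonal hμpos hT, htop, hfin,
    orthSplit_gradedFiltration hμsymm hμpos hT⟩

theorem Pairwise.update_inf_orthogonal (hμsymm : ∀ x y : V, μ x y = μ y x) {κ : Type*}
    [DecidableEq κ] {T : κ → Submodule ℝ V} (hT : Pairwise fun i j => T i ≤ μ.orthogonal (T j))
    (a : κ) (M : Submodule ℝ V) :
    Pairwise fun i j => update T a (M ⊓ μ.orthogonal (iSup T)) i
      ≤ μ.orthogonal (update T a (M ⊓ μ.orthogonal (iSup T)) j) := by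
  have hnew (j : κ) : M ⊓ μ.orthogonal (iSup T) ≤ μ.orthogonal (T j) :=
    inf_le_right.trans (orthogonal_le (le_iSup T j))
  intro i j hij
  by_cases hi : i = a
  · rw [hi, update_self, update_of_ne (fun h => hij (hi.trans h.symm))]
    exact hnew j
  by_cases hj : j = a
  · rw [hj, update_self, update_of_ne hi]
    exact (le_orthogonal_comm hμsymm).mp (hnew i)
  rw [update_of_ne hi, update_of_ne hj]
  exact hT hij

theorem exists_pairwise_le_orthogonal_finrank_eq [FiniteDimensional ℝ V]
    (hμsymm : ∀ x y : V, μ x y = μ y x) (hμpos : ∀ x : V, x ≠ 0 → 0 < μ x x) {κ : Type*}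
    [DecidableEq κ] (s : Finset κ) (P : κ → Submodule ℝ V) (hP : iSupIndep P)
    (hPs : ∀ w ∉ s, P w = ⊥) :
    ∃ T : κ → Submodule ℝ V, Pairwise (fun i j => T i ≤ μ.orthogonal (T j)) ∧
      (∀ w, finrank ℝ (T w) = finrank ℝ (P w)) ∧ iSup T = iSup P := by
  induction s using Finset.induction_on generalizing P with
  | empty =>
    obtain rfl : P = ⊥ := funext fun w => hPs w (Finset.notMem_empty w)
    exact ⟨⊥, fun _ _ _ => bot_le, fun _ => rfl, rfl⟩
  | insert a s _ ih =>
    have hP'indep : iSupIndep (update P a ⊥) :=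
      hP.mono fun j => by rcases eq_or_ne j a with rfl | hj <;> simp [*]
    have hP's : ∀ w ∉ s, update P a ⊥ w = ⊥ := fun w hw => by
      rcases eq_or_ne w a with rfl | hwa
      · exact update_self _ _ _
      · rw [update_of_ne hwa, hPs w (by simp [hwa, hw])]
    obtain ⟨T', hT'orth, hT'rank, hT'sup⟩ := ih (update P a ⊥) hP'indep hP's
    set N := ⨆ (j) (_ : j ≠ a), P j
    have hPN : iSup P = P a ⊔ N := iSup_split_single P a
    have hNP : N ≤ iSup P := hPN ▸ le_sup_right
    have hT'N : iSup T' = N := by rw [hT'sup, iSup_update_eq_sup, bot_sup_eq]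
    have hT'a : T' a = ⊥ := by
      rw [← Submodule.finrank_eq_zero, hT'rank, update_self, finrank_bot]
    have hT'ne : ⨆ (j) (_ : j ≠ a), T' j = iSup T' := by
      rw [iSup_split_single T' a, hT'a, bot_sup_eq]
    have hrank : finrank ℝ ↥(iSup P ⊓ μ.orthogonal N) = finrank ℝ (P a) := by
      have hPa := Submodule.finrank_sup_of_disjoint (hP a)
      have hO := Submodule.finrank_sup_of_disjoint
        ((disjoint_orthogonal_of_pos hμpos N).mono_right (inf_le_right : iSup P ⊓ _ ≤ _))
      rw [sup_inf_orthogonal_of_le hμsymm hμpos hNP] at hO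
      rw [← hPN] at hPa
      change _ = _ + finrank ℝ N at hPa
      omega
    refine ⟨update T' a (iSup P ⊓ μ.orthogonal (iSup T')),
      hT'orth.update_inf_orthogonal hμsymm a _, fun w => ?_, ?_⟩
    · by_cases hw : w = a
      · rw [hw, update_self, hT'N, hrank]
      · rw [update_of_ne hw, hT'rank, update_of_ne hw]
    · rw [iSup_update_eq_sup, hT'ne, hT'N, sup_comm, sup_inf_orthogonal_of_le hμsymm hμpos hNP]

theorem exists_pairwise_le_orthogonal_fiber [FiniteDimensional ℝ V]
    (hμsymm : ∀ x y : V, μ x y = μ y x) (hμpos : ∀ x : V, x ≠ 0 → 0 < μ x x) {ι ι' : Type*}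
    {D : (ι' → ℤ) → Submodule ℝ V} (hD : iSupIndep D) (hDfin : {w | D w ≠ ⊥}.Finite)
    (g : V ≃ₗ[ℝ] V) (f : ι → ι') (v : ι → ℤ) :
    ∃ T : (ι' → ℤ) → Submodule ℝ V, Pairwise (fun w w' => T w ≤ μ.orthogonal (T w')) ∧
      (∀ w, w ∘ f = v → finrank ℝ (T w) = finrank ℝ (D w)) ∧ (∀ w, w ∘ f ≠ v → T w = ⊥) ∧
      iSup T = (coarsen D f v).map (g : V →ₗ[ℝ] V) := by
  classical
  let P (w : ι' → ℤ) : Submodule ℝ V := if w ∘ f = v then (D w).map (g : V →ₗ[ℝ] V) else ⊥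
  have hP : iSupIndep P := (hD.map_orderIso (Submodule.orderIsoMapComap g)).mono fun w => by
    dsimp only [P]
    split_ifs <;> simp
  obtain ⟨T, hTorth, hTrank, hTsup⟩ := exists_pairwise_le_orthogonal_finrank_eq hμsymm hμpos
    hDfin.toFinset P hP fun w hw => by simp_all [P]
  refine ⟨T, hTorth, fun w hw => ?_, fun w hw => ?_, ?_⟩
  · rw [hTrank, show P w = _ from if_pos hw, LinearEquiv.finrank_map_eq]
  · rw [← Submodule.finrank_eq_zero, hTrank, show P w = ⊥ from if_neg hw, finrank_bot]
  · rw [hTsup]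
    simp [P, coarsen, Submodule.map_iSup, iSup_ite]

theorem exists_orthogonal_refinement [FiniteDimensional ℝ V]
    (hμsymm : ∀ x y : V, μ x y = μ y x) (hμpos : ∀ x : V, x ≠ 0 → 0 < μ x x) {ι ι' : Type*}
    {D : (ι' → ℤ) → Submodule ℝ V} (hD : iSupIndep D) (hDtop : iSup D = ⊤)
    (hDfin : {w | D w ≠ ⊥}.Finite) (f : ι → ι') {U : (ι → ℤ) → Submodule ℝ V}
    (hUorth : Pairwise fun v v' => U v ≤ μ.orthogonal (U v')) (hUtop : iSup U = ⊤)
    (hrank : ∀ v, finrank ℝ ↥(coarsen D f v) = finrank ℝ (U v)) :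
    ∃ T : (ι' → ℤ) → Submodule ℝ V, Pairwise (fun w w' => T w ≤ μ.orthogonal (T w')) ∧
      (∀ w, finrank ℝ (T w) = finrank ℝ (D w)) ∧ coarsen T f = U := by
  classical
  obtain ⟨g, hg⟩ := exists_linearEquiv_map_eq
    (DirectSum.isInternal_submodule_of_iSupIndep_of_iSup_eq_top (hD.coarsen f)
      (by rw [iSup_coarsen, hDtop]))
    (DirectSum.isInternal_submodule_of_iSupIndep_of_iSup_eq_top
      (iSupIndep_of_pairwise_le_orthogonal hμpos hUorth) hUtop) hrank
  choose T hTorth hTrank hToff hTsup using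
    exists_pairwise_le_orthogonal_fiber hμsymm hμpos hD hDfin g f
  simp only [hg] at hTsup
  have hTle (v : ι → ℤ) (w : ι' → ℤ) : T v w ≤ U v := hTsup v ▸ le_iSup (T v) w
  refine ⟨fun w => T (w ∘ f) w, fun w w' hne => ?_, fun w => ?_, funext fun v => ?_⟩
  · show T (w ∘ f) w ≤ μ.orthogonal (T (w' ∘ f) w')
    by_cases h : w ∘ f = w' ∘ f
    · rw [h]
      exact hTorth _ hne
    · exact (hTle _ w).trans ((hUorth h).trans (orthogonal_le (hTle _ w')))
  · exact hTrank _ w rfl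
  · refine le_antisymm (iSup₂_le fun w (hw : w ∘ f = v) => hw ▸ hTle _ w) ?_
    rw [← hTsup v]
    refine iSup_le fun w => ?_
    by_cases hw : w ∘ f = v
    · subst hw
      exact le_biSup (fun w' => T (w' ∘ f) w') (show w ∈ {w' | w' ∘ f = w ∘ f} from rfl)
    · rw [hToff v w hw]
      exact bot_le

theorem exists_linearEquiv_map_orthogonal_refinement [FiniteDimensional ℝ V]
    (hμsymm : ∀ x y : V, μ x y = μ y x) (hμpos : ∀ x : V, x ≠ 0 → 0 < μ x x) {ι ι' : Type*}
    {D : (ι' → ℤ) → Submodule ℝ V} (hD : iSupIndep D) (hDtop : iSup D = ⊤)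
    (hDfin : {w | D w ≠ ⊥}.Finite) (f : ι → ι') {U : (ι → ℤ) → Submodule ℝ V}
    (hUorth : Pairwise fun v v' => U v ≤ μ.orthogonal (U v')) (hUtop : iSup U = ⊤)
    (hrank : ∀ v, finrank ℝ ↥(coarsen D f v) = finrank ℝ (U v)) :
    ∃ g : V ≃ₗ[ℝ] V, (Pairwise fun w w' =>
      (D w).map (g : V →ₗ[ℝ] V) ≤ μ.orthogonal ((D w').map (g : V →ₗ[ℝ] V))) ∧
      coarsen (fun w => (D w).map (g : V →ₗ[ℝ] V)) f = U := by
  classical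
  obtain ⟨T, hTorth, hTrank, hTU⟩ :=
    exists_orthogonal_refinement hμsymm hμpos hD hDtop hDfin f hUorth hUtop hrank
  have hTtop : iSup T = ⊤ := by rw [← iSup_coarsen T f, hTU, hUtop]
  obtain ⟨g, hg⟩ := exists_linearEquiv_map_eq
    (DirectSum.isInternal_submodule_of_iSupIndep_of_iSup_eq_top hD hDtop)
    (DirectSum.isInternal_submodule_of_iSupIndep_of_iSup_eq_top
      (iSupIndep_of_pairwise_le_orthogonal hμpos hTorth) hTtop)
    fun w => (hTrank w).symm
  refine ⟨g, ?_, ?_⟩ <;> simp only [hg]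
  exacts [hTorth, hTU]

end OrthogonalSplitting

/-- If `Φ'` is a finite set of increasing filtrations having a compatible splitting,
`Φ ⊆ Φ'`, and the inner product `μ` gives compatible orthogonal splittings of the
members of `Φ`, then there is an automorphism `g` preserving every filtration in `Φ`
such that `μ` gives compatible orthogonal splittings of the filtrations `gW'`, `W' ∈ Φ'`. -/
theorem exists_automorphism_making_splittings_compatible
    {V : Type*} [AddCommGroup V] [Module ℝ V] [FiniteDimensional ℝ V]
    (μ : LinearMap.BilinForm ℝ V)
    (hμsymm : ∀ x y : V, μ x y = μ y x) (hμpos : ∀ x : V, x ≠ 0 → 0 < μ x x)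
    (Φ' : Set (ℤ → Submodule ℝ V)) (hΦ'fin : Φ'.Finite)
    (hΦ'fil : ∀ W ∈ Φ', IsIncFiltration W)
    (hΦ'compat : ∃ s : (ℤ → Submodule ℝ V) → ℤ → Submodule ℝ V,
      (∀ W ∈ Φ', IsSplitting W (s W)) ∧ CompatibleFamily (fun W : Φ' => s W.1))
    (Φ : Set (ℤ → Submodule ℝ V)) (hΦ : Φ ⊆ Φ')
    (hcompat : CompatibleFamily (fun W : Φ => orthSplit μ W.1)) :
    ∃ g : V ≃ₗ[ℝ] V,
      (∀ W ∈ Φ, ∀ k : ℤ, Submodule.map (g : V →ₗ[ℝ] V) (W k) = W k) ∧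
      CompatibleFamily (fun W' : Φ' =>
        orthSplit μ (fun k => Submodule.map (g : V →ₗ[ℝ] V) (W'.1 k))) := by
  obtain ⟨s, hs, D, hD, hDtop, hDfin, hDs⟩ := hΦ'compat
  obtain ⟨U, hU, hUtop, -, hUs⟩ := hcompat
  have : Finite Φ := (hΦ'fin.subset hΦ).to_subtype
  let f : Φ → Φ' := Set.inclusion hΦ
  have hΦfil (W : Φ) : IsIncFiltration W.1 := hΦ'fil W (hΦ W.2)
  have hDfil (W : Φ') : W.1 = gradedFiltration D W :=
    eq_gradedFiltration_of_biSup (hs W W.2).2 (hDs W)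
  have hUfil (W : Φ) : W.1 = gradedFiltration U W :=
    eq_gradedFiltration_of_biSup ((hΦfil W).eq_biSup_orthSplit hμsymm hμpos) (hUs W)
  have hUorth := pairwise_le_orthogonal_of_orthSplit_eq hμsymm (fun W => (hΦfil W).1) hUs
  have hrank := finrank_eq_of_gradedFiltration_eq (hD.coarsen f) (by rw [iSup_coarsen, hDtop])
    hU hUtop fun W => by rw [gradedFiltration_coarsen, ← hDfil, ← hUfil]
  obtain ⟨g, hgorth, hgU⟩ :=
    exists_linearEquiv_map_orthogonal_refinement hμsymm hμpos hD hDtop hDfin f hUorth hUtop hrank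
  have hgfil (W : Φ') (k : ℤ) : (W.1 k).map (g : V →ₗ[ℝ] V)
      = gradedFiltration (fun w => (D w).map (g : V →ₗ[ℝ] V)) W k := by
    rw [hDfil W]
    simp only [gradedFiltration, Submodule.map_iSup]
  refine ⟨g, fun W hW k => ?_, ?_⟩
  · have hWk := hgfil (f ⟨W, hW⟩) k
    rwa [← gradedFiltration_coarsen, hgU, ← hUfil ⟨W, hW⟩] at hWk
  · simp_rw [hgfil]
    refine compatibleFamily_orthSplit_gradedFiltration hμsymm hμpos hgorth
      (by rw [← iSup_coarsen, hgU, hUtop]) (hDfin.subset fun w hgw hDw => hgw ?_)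
    rw [hDw, Submodule.map_bot]
end

section
/- Let (a_n)_{n≥1} be a sequence of real numbers with a_n > 1 for every n ≥ 1. Then there exists a C^∞ function g : ℝ → ℝ such that for every integer n ≥ 0 the n-th derivative g^{(n)} is a bounded function on ℝ (so that the real number b_n := limsup_{x→+∞} |g^{(n)}(x)| is well defined and finite), and such that b_{n+1} > a_{n+1} · b_n for every n ≥ 0. -/
/-!
Take `g x = ∑ₖ (Bₖ / Lₖ^k) cos (Lₖ x)` with amplitudes `Bₖ` and frequencies `Lₖ` growing so fast
that, in `g⁽ⁿ⁾ = ∑ₖ Bₖ Lₖ^(n-k) cos (Lₖ x + n π / 2)`, the terms `k < n` are negligible because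
`Lₖ ≪ Lₙ`, and the terms `k > n` are negligible because `Bₖ ≪ Lₖ`. Then the `n`-th term, of
amplitude `Bₙ`, dominates: `|g⁽ⁿ⁾| ≤ 5/4 Bₙ` everywhere and `|g⁽ⁿ⁾| ≥ 3/4 Bₙ` wherever its cosine
equals `1`, which happens for arbitrarily large `x`. So `limsup |g⁽ⁿ⁾| ∈ [3/4 Bₙ, 5/4 Bₙ]`, and
it suffices to let `Bₙ₊₁ / Bₙ` also exceed `2 |aₙ₊₁|`.
-/

open Filter Real Finset

theorem abs_tsum_sub_le_tsum_sub {ι : Type*} [DecidableEq ι] {f w : ι → ℝ} (hw : Summable w)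
    (hfw : ∀ i, |f i| ≤ w i) (j : ι) : |∑' i, f i - f j| ≤ ∑' i, w i - w j := by
  have hf : Summable f := .of_norm_bounded hw hfw
  have hw0 : ∀ i, 0 ≤ w i := fun i => (abs_nonneg _).trans (hfw i)
  have hw' : Summable fun i => if i = j then 0 else w i :=
    .of_nonneg_of_le (fun i => by split_ifs <;> simp [hw0 i])
      (fun i => by split_ifs <;> simp [hw0 i]) hw
  rw [hf.tsum_eq_add_tsum_ite j, hw.tsum_eq_add_tsum_ite j, add_sub_cancel_left,
    add_sub_cancel_left]
  refine tsum_of_norm_bounded (f := fun i => if i = j then 0 else f i) hw'.hasSum fun i => ?_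
  split_ifs
  · simp
  · exact hfw i

theorem hasDerivAt_cosSeriesTerm (c l : ℝ) (n : ℕ) (x : ℝ) :
    HasDerivAt (fun x => c * l ^ n * cos (l * x + n * (π / 2)))
      (c * l ^ (n + 1) * cos (l * x + (n + 1 : ℕ) * (π / 2))) x := by
  have := (((hasDerivAt_id x).const_mul l).add_const (n * (π / 2))).cos.const_mul (c * l ^ n)
  refine this.congr_deriv ?_
  rw [Nat.cast_succ, add_one_mul, ← add_assoc, cos_add_pi_div_two, pow_succ]
  simp only [id, mul_one]
  ring

theorem abs_cosSeriesTerm_le (c l : ℝ) (n : ℕ) (θ : ℝ) : |c * l ^ n * cos θ| ≤ |c| * |l| ^ n := by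
  rw [abs_mul, abs_mul, abs_pow]
  exact mul_le_of_le_one_right (by positivity) (abs_cos_le_one θ)

/-- The termwise `n`-th derivative of `∑ cₖ cos (Lₖ x)`, using `cos⁽ⁿ⁾ θ = cos (θ + n π / 2)`. -/
noncomputable def cosSeriesDeriv (c L : ℕ → ℝ) (n : ℕ) (x : ℝ) : ℝ :=
  ∑' k, c k * L k ^ n * cos (L k * x + n * (π / 2))

section CosSeries

variable {c L : ℕ → ℝ} (hsum : ∀ n, Summable fun k => |c k| * |L k| ^ n)
include hsum

theorem summable_cosSeriesTerm (n : ℕ) (x : ℝ) :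
    Summable fun k => c k * L k ^ n * cos (L k * x + n * (π / 2)) :=
  .of_norm_bounded (hsum n) fun _ => abs_cosSeriesTerm_le _ _ n _

theorem differentiable_cosSeriesDeriv (n : ℕ) : Differentiable ℝ (cosSeriesDeriv c L n) :=
  differentiable_tsum' (hsum (n + 1)) (fun k => hasDerivAt_cosSeriesTerm (c k) (L k) n)
    fun _ _ => abs_cosSeriesTerm_le _ _ _ _

theorem deriv_cosSeriesDeriv (n : ℕ) :
    deriv (cosSeriesDeriv c L n) = cosSeriesDeriv c L (n + 1) := by
  refine (deriv_tsum (hsum (n + 1))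
    (fun k y => (hasDerivAt_cosSeriesTerm (c k) (L k) n y).differentiableAt)
    (fun k y => ?_) (summable_cosSeriesTerm hsum n 0)).trans ?_
  · rw [(hasDerivAt_cosSeriesTerm (c k) (L k) n y).deriv]
    exact abs_cosSeriesTerm_le _ _ _ _
  · ext x
    exact tsum_congr fun k => (hasDerivAt_cosSeriesTerm (c k) (L k) n x).deriv

theorem iteratedDeriv_cosSeriesDeriv_zero (n : ℕ) :
    iteratedDeriv n (cosSeriesDeriv c L 0) = cosSeriesDeriv c L n := by
  induction n with
  | zero => rfl
  | succ n ih => rw [iteratedDeriv_succ, ih, deriv_cosSeriesDeriv hsum]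

theorem contDiff_cosSeriesDeriv_zero : ContDiff ℝ (⊤ : ℕ∞) (cosSeriesDeriv c L 0) :=
  contDiff_of_differentiable_iteratedDeriv fun n _ => by
    rw [iteratedDeriv_cosSeriesDeriv_zero hsum]
    exact differentiable_cosSeriesDeriv hsum n

theorem abs_cosSeriesDeriv_sub_le (n : ℕ) (x : ℝ) :
    |cosSeriesDeriv c L n x - c n * L n ^ n * cos (L n * x + n * (π / 2))| ≤
      ∑' k, |c k| * |L k| ^ n - |c n| * |L n| ^ n :=
  abs_tsum_sub_le_tsum_sub (hsum n) (fun _ => abs_cosSeriesTerm_le _ _ _ _) n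

end CosSeries

theorem frequently_cos_mul_add_eq_one {l : ℝ} (hl : 0 < l) (φ : ℝ) :
    ∃ᶠ x in atTop, cos (l * x + φ) = 1 := by
  have hu : Tendsto (fun j : ℕ => (j * (2 * π) + -φ) / l) atTop atTop :=
    (tendsto_atTop_add_const_right _ _
      (tendsto_natCast_atTop_atTop.atTop_mul_const (by positivity))).atTop_div_const hl
  refine hu.frequently (Frequently.of_forall fun j => ?_)
  rw [mul_div_cancel₀ _ hl.ne', neg_add_cancel_right, cos_nat_mul_two_pi]

noncomputable def lacunaryCosSeries (B L : ℕ → ℝ) : ℝ → ℝ :=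
  cosSeriesDeriv (fun k => B k / L k ^ k) L 0

/-- `B n` is the amplitude of the `n`-th term of the `n`-th derivative of
`∑ₖ (B k / L k ^ k) cos (L k x)` and `L n` its frequency; these growth conditions make that term
dominate (`IsLacunaryScale.tsum_coeff_mul_pow_sub_le`). -/
structure IsLacunaryScale (B L : ℕ → ℝ) : Prop where
  one_le : ∀ n, 1 ≤ B n
  two_pow_mul_le : ∀ n, 2 ^ (n + 3) * B n ≤ L n
  nine_mul_mul_le : ∀ n, 9 * L n * B n ≤ B (n + 1)

namespace IsLacunaryScale

variable {B L : ℕ → ℝ} (h : IsLacunaryScale B L)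
include h

theorem pos (n : ℕ) : 0 < B n := one_pos.trans_le (h.one_le n)

theorem one_le_freq (n : ℕ) : 1 ≤ L n := by
  have := h.two_pow_mul_le n
  have : (1 : ℝ) ≤ 2 ^ (n + 3) := one_le_pow₀ one_le_two
  nlinarith [h.one_le n]

theorem freq_pos (n : ℕ) : 0 < L n := one_pos.trans_le (h.one_le_freq n)

theorem monotone_freq : Monotone L := by
  refine monotone_nat_of_le_succ fun n => ?_
  have := h.two_pow_mul_le (n + 1)
  have : (1 : ℝ) ≤ 2 ^ (n + 1 + 3) := one_le_pow₀ one_le_two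
  nlinarith [h.nine_mul_mul_le n, h.one_le n, h.one_le (n + 1), h.freq_pos n]

theorem coeff_mul_pow_self (n : ℕ) : B n / L n ^ n * L n ^ n = B n :=
  div_mul_cancel₀ _ (pow_ne_zero _ (h.freq_pos n).ne')

theorem coeff_mul_pow_nonneg (k n : ℕ) : 0 ≤ B k / L k ^ k * L k ^ n := by
  have := h.pos k; have := h.freq_pos k; positivity

theorem coeff_mul_pow_le_of_lt {k n : ℕ} (hnk : n < k) :
    B k / L k ^ k * L k ^ n ≤ (1 / 2) ^ (k + 3) := by
  have hL := h.freq_pos k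
  have hB := h.pos k
  obtain ⟨m, rfl⟩ := Nat.exists_eq_add_of_lt hnk
  calc B (n + m + 1) / L (n + m + 1) ^ (n + m + 1) * L (n + m + 1) ^ n
      = B (n + m + 1) / L (n + m + 1) / L (n + m + 1) ^ m := by
        field_simp
        ring
    _ ≤ B (n + m + 1) / L (n + m + 1) :=
        div_le_self (by positivity) (one_le_pow₀ (h.one_le_freq _))
    _ ≤ B (n + m + 1) / (2 ^ (n + m + 1 + 3) * B (n + m + 1)) :=
        div_le_div_of_nonneg_left hB.le (by positivity) (h.two_pow_mul_le _)
    _ = (1 / 2) ^ (n + m + 1 + 3) := by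
        rw [mul_comm, ← div_div, div_self hB.ne', one_div_pow]

theorem sum_coeff_mul_pow_le (n : ℕ) : ∑ k ∈ range n, B k / L k ^ k * L k ^ n ≤ B n / 8 := by
  induction n with
  | zero =>
    rw [range_zero, sum_empty]
    exact div_nonneg (h.pos 0).le (by norm_num)
  | succ n ih =>
    have hterm : ∀ k ∈ range n, B k / L k ^ k * L k ^ (n + 1) ≤ L n * (B k / L k ^ k * L k ^ n) :=
      fun k hk => by
        rw [pow_succ, ← mul_assoc, mul_comm _ (L k)]
        exact mul_le_mul_of_nonneg_right (h.monotone_freq (mem_range.1 hk).le)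
          (h.coeff_mul_pow_nonneg k n)
    calc ∑ k ∈ range (n + 1), B k / L k ^ k * L k ^ (n + 1)
        = ∑ k ∈ range n, B k / L k ^ k * L k ^ (n + 1) + L n * B n := by
          rw [sum_range_succ, pow_succ, ← mul_assoc, h.coeff_mul_pow_self, mul_comm]
      _ ≤ L n * ∑ k ∈ range n, B k / L k ^ k * L k ^ n + L n * B n := by
          rw [mul_sum]
          exact add_le_add_left (sum_le_sum hterm) _
      _ ≤ L n * (B n / 8) + L n * B n := by
          gcongr
          exact (h.freq_pos n).le
      _ ≤ B (n + 1) / 8 := by nlinarith [h.nine_mul_mul_le n]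

theorem coeff_mul_pow_add_le (n k : ℕ) :
    B (k + (n + 1)) / L (k + (n + 1)) ^ (k + (n + 1)) * L (k + (n + 1)) ^ n ≤
      (1 / 2) ^ (n + 4) * (1 / 2) ^ k :=
  (h.coeff_mul_pow_le_of_lt (by omega)).trans_eq (by ring)

theorem summable_coeff_mul_pow (n : ℕ) : Summable fun k => B k / L k ^ k * L k ^ n :=
  (summable_nat_add_iff (n + 1)).1 <| .of_nonneg_of_le (fun _ => h.coeff_mul_pow_nonneg _ n)
    (h.coeff_mul_pow_add_le n) (summable_geometric_two.mul_left _)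

theorem tsum_coeff_mul_pow_sub_le (n : ℕ) : ∑' k, B k / L k ^ k * L k ^ n - B n ≤ B n / 4 := by
  have htail : ∑' k, B (k + (n + 1)) / L (k + (n + 1)) ^ (k + (n + 1)) * L (k + (n + 1)) ^ n ≤
      B n / 8 := calc
    _ ≤ ∑' k : ℕ, (1 / 2 : ℝ) ^ (n + 4) * (1 / 2) ^ k :=
        ((summable_nat_add_iff (n + 1)).2 (h.summable_coeff_mul_pow n)).tsum_le_tsum
          (h.coeff_mul_pow_add_le n) (summable_geometric_two.mul_left _)
    _ = (1 / 2) ^ n / 8 := by rw [tsum_mul_left, tsum_geometric_two]; ring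
    _ ≤ 1 / 8 := by gcongr; exact pow_le_one₀ (by norm_num) (by norm_num)
    _ ≤ B n / 8 := by gcongr; exact h.one_le n
  rw [← (h.summable_coeff_mul_pow n).sum_add_tsum_nat_add (n + 1), sum_range_succ,
    h.coeff_mul_pow_self]
  linarith [h.sum_coeff_mul_pow_le n]

theorem abs_coeff_mul_abs_pow (k n : ℕ) :
    |B k / L k ^ k| * |L k| ^ n = B k / L k ^ k * L k ^ n := by
  have := h.pos k; have := h.freq_pos k
  rw [abs_of_pos (by positivity), abs_of_pos this]

theorem summable_abs_coeff_mul_abs_pow (n : ℕ) :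
    Summable fun k => |B k / L k ^ k| * |L k| ^ n := by
  simpa only [h.abs_coeff_mul_abs_pow] using h.summable_coeff_mul_pow n

theorem contDiff_lacunaryCosSeries : ContDiff ℝ (⊤ : ℕ∞) (lacunaryCosSeries B L) :=
  contDiff_cosSeriesDeriv_zero h.summable_abs_coeff_mul_abs_pow

theorem abs_iteratedDeriv_sub_le (n : ℕ) (x : ℝ) :
    |iteratedDeriv n (lacunaryCosSeries B L) x - B n * cos (L n * x + n * (π / 2))| ≤ B n / 4 := by
  have := abs_cosSeriesDeriv_sub_le h.summable_abs_coeff_mul_abs_pow n x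
  simp only [h.abs_coeff_mul_abs_pow, h.coeff_mul_pow_self] at this
  rw [lacunaryCosSeries, iteratedDeriv_cosSeriesDeriv_zero h.summable_abs_coeff_mul_abs_pow]
  exact this.trans (h.tsum_coeff_mul_pow_sub_le n)

theorem abs_iteratedDeriv_le (n : ℕ) (x : ℝ) :
    |iteratedDeriv n (lacunaryCosSeries B L) x| ≤ 5 / 4 * B n := by
  have hcos : |B n * cos (L n * x + n * (π / 2))| ≤ B n := by
    simpa [abs_of_pos (h.pos n)] using abs_cosSeriesTerm_le (B n) 1 0 (L n * x + n * (π / 2))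
  have := abs_sub_abs_le_abs_sub (iteratedDeriv n (lacunaryCosSeries B L) x)
    (B n * cos (L n * x + n * (π / 2)))
  linarith [h.abs_iteratedDeriv_sub_le n x]

theorem frequently_le_abs_iteratedDeriv (n : ℕ) :
    ∃ᶠ x in atTop, 3 / 4 * B n ≤ |iteratedDeriv n (lacunaryCosSeries B L) x| := by
  refine (frequently_cos_mul_add_eq_one (h.freq_pos n) (n * (π / 2))).mono fun x hx => ?_
  have := h.abs_iteratedDeriv_sub_le n x
  rw [hx, mul_one] at this
  have := abs_sub_abs_le_abs_sub (B n) (iteratedDeriv n (lacunaryCosSeries B L) x)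
  rw [abs_sub_comm, abs_of_pos (h.pos n)] at this
  linarith

theorem limsup_abs_iteratedDeriv_mem_Icc (n : ℕ) :
    limsup (fun x => |iteratedDeriv n (lacunaryCosSeries B L) x|) atTop ∈
      Set.Icc (3 / 4 * B n) (5 / 4 * B n) :=
  ⟨le_limsup_of_frequently_le (h.frequently_le_abs_iteratedDeriv n)
      (isBoundedUnder_of ⟨_, h.abs_iteratedDeriv_le n⟩),
    limsup_le_of_le (isCoboundedUnder_le_of_le atTop fun _ => abs_nonneg _)
      (Eventually.of_forall (h.abs_iteratedDeriv_le n))⟩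

end IsLacunaryScale

noncomputable def growthAmp (a : ℕ → ℝ) : ℕ → ℝ
  | 0 => 1
  | n + 1 => (2 * |a (n + 1)| + 9 * (2 ^ (n + 3) * growthAmp a n)) * growthAmp a n

theorem one_le_growthAmp (a : ℕ → ℝ) (n : ℕ) : 1 ≤ growthAmp a n := by
  induction n with
  | zero => rfl
  | succ n ih =>
    have hP : 1 ≤ 2 ^ (n + 3) * growthAmp a n := one_le_mul_of_one_le_of_one_le
      (one_le_pow₀ one_le_two) ih
    rw [growthAmp]
    nlinarith [mul_nonneg (abs_nonneg (a (n + 1))) (zero_le_one.trans ih)]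

theorem isLacunaryScale_growthAmp (a : ℕ → ℝ) :
    IsLacunaryScale (growthAmp a) fun n => 2 ^ (n + 3) * growthAmp a n where
  one_le := one_le_growthAmp a
  two_pow_mul_le _ := le_rfl
  nine_mul_mul_le n := by
    rw [growthAmp]
    nlinarith [abs_nonneg (a (n + 1)), one_le_growthAmp a n]

theorem abs_mul_growthAmp_lt (a : ℕ → ℝ) (n : ℕ) :
    |a (n + 1)| * (5 / 4 * growthAmp a n) < 3 / 4 * growthAmp a (n + 1) := by
  have hB := one_le_growthAmp a n
  have hP : 1 ≤ 2 ^ (n + 3) * growthAmp a n := one_le_mul_of_one_le_of_one_le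
    (one_le_pow₀ one_le_two) hB
  rw [growthAmp]
  nlinarith [mul_nonneg (abs_nonneg (a (n + 1))) (zero_le_one.trans hB)]

theorem exists_smooth_function_with_growing_derivative_limsups_general
    (a : ℕ → ℝ) :
    ∃ g : ℝ → ℝ, ContDiff ℝ (⊤ : ℕ∞) g ∧
      (∀ n : ℕ, ∃ C : ℝ, ∀ x : ℝ, |iteratedDeriv n g x| ≤ C) ∧
      (∀ n : ℕ,
        a (n + 1) * limsup (fun x : ℝ => |iteratedDeriv n g x|) atTop
          < limsup (fun x : ℝ => |iteratedDeriv (n + 1) g x|) atTop) := by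
  have h := isLacunaryScale_growthAmp a
  refine ⟨_, h.contDiff_lacunaryCosSeries, fun n => ⟨_, h.abs_iteratedDeriv_le n⟩, fun n => ?_⟩
  obtain ⟨hlow, hupp⟩ := h.limsup_abs_iteratedDeriv_mem_Icc n
  calc a (n + 1) * limsup (fun x => |iteratedDeriv n (lacunaryCosSeries _ _) x|) atTop
      ≤ |a (n + 1)| * limsup (fun x => |iteratedDeriv n (lacunaryCosSeries _ _) x|) atTop :=
        mul_le_mul_of_nonneg_right (le_abs_self _) (by linarith [h.pos n])
    _ ≤ |a (n + 1)| * (5 / 4 * growthAmp a n) := by gcongr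
    _ < 3 / 4 * growthAmp a (n + 1) := abs_mul_growthAmp_lt a n
    _ ≤ _ := (h.limsup_abs_iteratedDeriv_mem_Icc (n + 1)).1

/-- Given any sequence of real numbers `a_n > 1` (`n ≥ 1`), there is a `C^∞` function
`g : ℝ → ℝ` all of whose derivatives are bounded, such that the (finite) numbers
`b_n = limsup_{x → +∞} |g^{(n)}(x)|` satisfy `b_{n+1} > a_{n+1} · b_n` for every `n ≥ 0`. -/
theorem exists_smooth_function_with_growing_derivative_limsups
    (a : ℕ → ℝ) (ha : ∀ n : ℕ, 1 ≤ n → 1 < a n) :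
    ∃ g : ℝ → ℝ, ContDiff ℝ (⊤ : ℕ∞) g ∧
      (∀ n : ℕ, ∃ C : ℝ, ∀ x : ℝ, |iteratedDeriv n g x| ≤ C) ∧
      (∀ n : ℕ,
        a (n + 1) * limsup (fun x : ℝ => |iteratedDeriv n g x|) atTop
          < limsup (fun x : ℝ => |iteratedDeriv (n + 1) g x|) atTop) :=
  exists_smooth_function_with_growing_derivative_limsups_general a
end

section
/- Let B be a finitely generated additive submonoid of the nonnegative real numbers, and let a : ℕ × B → ℂ be a family of complex numbers. Assume that there exists a real number r with 0 < r < 1 such that the family (|a(m,n)| · r^m · r^n)_{(m,n)∈ℕ×B} is summable (where r^n for real n ≥ 0 denotes the real power). Assume moreover that there exist a subset T of the positive reals whose closure contains 0 and a real number ε > 0 such that for every t ∈ T with t < ε, the family (a(m,n) · t^m · (exp(−t^{−2}))^n)_{(m,n)∈ℕ×B} is summable with sum equal to 0. Then a(m,n) = 0 for all (m,n) ∈ ℕ × B. -/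
/-!
Since `B ∩ [0, C]` is finite for every `C`, the nonzero coefficients have a leading index
`(m₀, n₀)`, minimal in `n` first and then in `m`, and the exponents of `B` above `n₀` are at least
`n₀ + δ` for some `δ > 0`. Divide the vanishing series by `t ^ m₀ * exp (-n₀ / t²)`. As `t → 0⁺`
every other term tends to `0`, either through a positive power of `t` or because `exp (-δ / t²)`
is flat at `0`, and for small `t` the terms are dominated by a multiple of `‖a (m, n)‖ r ^ m r ^ n`.
Dominated convergence along `T` leaves `a (m₀, n₀) = 0`.
-/

open Filter Topology Set

namespace AddSubmonoid

lemma finite_closure_singleton_inter_Iic {s : ℝ} (hs : 0 ≤ s) (C : ℝ) :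
    ((closure {s} : Set ℝ) ∩ Iic C).Finite := by
  refine ((finite_Iic ⌈C / s⌉₊).image fun k : ℕ => k • s).subset ?_
  rintro x ⟨hx, hxC⟩
  obtain ⟨k, rfl⟩ := mem_closure_singleton.mp hx
  rcases hs.eq_or_lt with rfl | hs
  · exact ⟨0, by simp⟩
  refine ⟨k, ?_, rfl⟩
  rw [nsmul_eq_mul] at hxC
  exact_mod_cast ((le_div_iff₀ hs).mpr hxC).trans (Nat.le_ceil _)

lemma finite_inter_Iic_of_fg {B : AddSubmonoid ℝ} (hB : ∀ x ∈ B, 0 ≤ x) (hfg : B.FG) (C : ℝ) :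
    ((B : Set ℝ) ∩ Iic C).Finite := by
  obtain ⟨S, rfl⟩ := hfg
  induction S using Finset.induction_on with
  | empty => simpa using (finite_singleton 0).subset inter_subset_left
  | insert s S _ ih =>
    rw [Finset.coe_insert, insert_eq, closure_union] at hB ⊢
    have hs : ∀ y ∈ closure {s}, 0 ≤ y := fun y hy => hB y (mem_sup_left hy)
    have hS : ∀ z ∈ closure (S : Set ℝ), 0 ≤ z := fun z hz => hB z (mem_sup_right hz)
    refine ((finite_closure_singleton_inter_Iic (hs s (subset_closure rfl)) C).image2 (· + ·)
      (ih hS)).subset ?_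
    rintro x ⟨hx, hxC⟩
    obtain ⟨y, hy, z, hz, rfl⟩ := mem_sup.mp hx
    have hy0 := hs y hy
    have hz0 := hS z hz
    rw [mem_Iic] at hxC
    exact ⟨y, ⟨hy, mem_Iic.mpr (by linarith)⟩, z, ⟨hz, mem_Iic.mpr (by linarith)⟩, rfl⟩

end AddSubmonoid

lemma exists_add_le_of_lt_of_finite_inter_Iic {B : Set ℝ} (hB : ∀ C, (B ∩ Iic C).Finite)
    (x₀ : ℝ) :
    ∃ δ > 0, ∀ x ∈ B, x₀ < x → x₀ + δ ≤ x := by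
  set G := B ∩ Iic (x₀ + 1) ∩ Ioi x₀
  have hG : G.Finite := (hB (x₀ + 1)).subset inter_subset_left
  have hsmall : ∀ᶠ δ in 𝓝[>] (0 : ℝ), 0 < δ ∧ δ ≤ 1 ∧ ∀ x ∈ G, x₀ + δ ≤ x := by
    have hpos : ∀ᶠ δ in 𝓝[>] (0 : ℝ), 0 < δ := self_mem_nhdsWithin
    refine hpos.and ((eventually_le_nhds one_pos).filter_mono nhdsWithin_le_nhds
      |>.and ((eventually_all_finite hG).mpr fun x hx => ?_))
    filter_upwards [(eventually_le_nhds (sub_pos.mpr hx.2)).filter_mono nhdsWithin_le_nhds]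
      with δ hδ
    linarith
  obtain ⟨δ, hδ, hδ1, hδG⟩ := hsmall.exists
  refine ⟨δ, hδ, fun x hx hx₀ => ?_⟩
  by_cases hx1 : x ≤ x₀ + 1
  · exact hδG x ⟨⟨hx, hx1⟩, hx₀⟩
  · linarith

lemma exists_mem_forall_snd_lt_or_fst_le {B : Set ℝ} (hB : ∀ C, (B ∩ Iic C).Finite)
    {S : Set (ℕ × B)} (hS : S.Nonempty) :
    ∃ p₀ ∈ S, ∀ p ∈ S, ((p.2 : ℝ) = p₀.2 ∧ p₀.1 ≤ p.1) ∨ (p₀.2 : ℝ) < p.2 := by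
  classical
  obtain ⟨p₁, hp₁⟩ := hS
  have hV : ((fun p : ℕ × B => (p.2 : ℝ)) '' S ∩ Iic (p₁.2 : ℝ)).Finite :=
    (hB p₁.2).subset fun _ ⟨⟨p, _, hp⟩, hle⟩ => ⟨hp ▸ p.2.2, hle⟩
  obtain ⟨_, ⟨⟨q, hq, rfl⟩, -⟩, hq_min⟩ :=
    exists_min_image _ id hV ⟨_, ⟨p₁, hp₁, rfl⟩, mem_Iic.mpr le_rfl⟩
  have hq_le : ∀ p ∈ S, (q.2 : ℝ) ≤ p.2 := fun p hp =>
    (le_total (p.2 : ℝ) p₁.2).elim (fun h => hq_min _ ⟨⟨p, hp, rfl⟩, h⟩)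
      fun h => (hq_min _ ⟨⟨p₁, hp₁, rfl⟩, mem_Iic.mpr le_rfl⟩).trans h
  have hm : ∃ m, (m, q.2) ∈ S := ⟨q.1, hq⟩
  refine ⟨(Nat.find hm, q.2), Nat.find_spec hm, fun p hp => ?_⟩
  rcases (hq_le p hp).eq_or_lt with h | h
  · exact .inl ⟨h.symm, Nat.find_min' hm (Subtype.ext h.symm ▸ hp)⟩
  · exact .inr h

lemma pow_mul_rpow_div_le {x y r n n₀ δ : ℝ} {m m₀ : ℕ} (hx : 0 < x) (hxr : x ≤ r) (hy : 0 < y)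
    (hyr : y ≤ r) (hr1 : r ≤ 1) (hδ : 0 ≤ δ) (hyx : y ^ δ ≤ x ^ m₀)
    (h : (n = n₀ ∧ m₀ ≤ m) ∨ n₀ + δ ≤ n) :
    x ^ m * y ^ n / (x ^ m₀ * y ^ n₀) ≤ r ^ m * r ^ n / (r ^ m₀ * r ^ (n₀ + δ)) := by
  have hr : 0 < r := hx.trans_le hxr
  rw [div_le_div_iff₀ (by positivity) (by positivity)]
  rcases h with ⟨rfl, hm⟩ | hn
  · obtain ⟨k, rfl⟩ := Nat.exists_eq_add_of_le hm
    have hrn : r ^ (n + δ) ≤ r ^ n := Real.rpow_le_rpow_of_exponent_ge hr hr1 (by linarith)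
    calc x ^ (m₀ + k) * y ^ n * (r ^ m₀ * r ^ (n + δ))
        = x ^ k * r ^ (n + δ) * (x ^ m₀ * y ^ n * r ^ m₀) := by ring
      _ ≤ r ^ k * r ^ n * (x ^ m₀ * y ^ n * r ^ m₀) := by gcongr
      _ = r ^ (m₀ + k) * r ^ n * (x ^ m₀ * y ^ n) := by ring
  · obtain ⟨s, hs, rfl⟩ : ∃ s, 0 ≤ s ∧ n = n₀ + δ + s := ⟨n - n₀ - δ, by linarith, by ring⟩
    simp only [Real.rpow_add hy, Real.rpow_add hr]
    calc x ^ m * (y ^ n₀ * y ^ δ * y ^ s) * (r ^ m₀ * (r ^ n₀ * r ^ δ))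
        = x ^ m * y ^ δ * y ^ s * r ^ m₀ * (y ^ n₀ * r ^ n₀ * r ^ δ) := by ring
      _ ≤ r ^ m * x ^ m₀ * r ^ s * 1 * (y ^ n₀ * r ^ n₀ * r ^ δ) := by
        gcongr
        exact pow_le_one₀ hr.le hr1
      _ = r ^ m * (r ^ n₀ * r ^ δ * r ^ s) * (x ^ m₀ * y ^ n₀) := by ring

noncomputable def flatMonomial (t : ℝ) (m : ℕ) (n : ℝ) : ℝ := t ^ m * Real.exp (-(t ^ 2)⁻¹) ^ n

lemma flatMonomial_pos {t : ℝ} (ht : 0 < t) (m : ℕ) (n : ℝ) : 0 < flatMonomial t m n :=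
  mul_pos (pow_pos ht m) (Real.rpow_pos_of_pos (Real.exp_pos _) n)

lemma tendsto_exp_neg_inv_sq_rpow_div_pow (m : ℕ) {c : ℝ} (hc : 0 < c) :
    Tendsto (fun t : ℝ => Real.exp (-(t ^ 2)⁻¹) ^ c / t ^ m) (𝓝[>] 0) (𝓝 0) := by
  have hinv : Tendsto (fun t : ℝ => (t ^ 2)⁻¹) (𝓝[>] 0) atTop := by
    simpa only [Function.comp_def, inv_pow] using
      (tendsto_pow_atTop two_ne_zero).comp (tendsto_inv_nhdsGT_zero (𝕜 := ℝ))
  refine ((tendsto_rpow_mul_exp_neg_mul_atTop_nhds_zero (m / 2) c hc).comp hinv).congr' ?_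
  filter_upwards [self_mem_nhdsWithin] with t (ht : 0 < t)
  rw [Function.comp_apply, Real.inv_rpow (by positivity), ← Real.rpow_natCast t 2,
    ← Real.rpow_mul ht.le, ← Real.exp_mul, Nat.cast_ofNat, mul_div_cancel₀ _ two_ne_zero,
    Real.rpow_natCast]
  ring_nf

lemma tendsto_flatMonomial_div {m m₀ : ℕ} {n n₀ : ℝ} (h : (n = n₀ ∧ m₀ < m) ∨ n₀ < n) :
    Tendsto (fun t => flatMonomial t m n / flatMonomial t m₀ n₀) (𝓝[>] 0) (𝓝 0) := by
  rcases h with ⟨rfl, hm⟩ | hn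
  · have : Tendsto (fun t : ℝ => t ^ (m - m₀)) (𝓝[>] 0) (𝓝 0) :=
      ((continuous_pow _).tendsto' 0 0 (zero_pow (by omega))).mono_left nhdsWithin_le_nhds
    refine this.congr' ?_
    filter_upwards [self_mem_nhdsWithin] with t (ht : 0 < t)
    simp only [flatMonomial, pow_sub₀ t ht.ne' hm.le]
    field_simp
  · have : Tendsto (fun t : ℝ => t ^ m * (Real.exp (-(t ^ 2)⁻¹) ^ (n - n₀) / t ^ m₀))
        (𝓝[>] 0) (𝓝 0) := by
      simpa using (((continuous_pow m).tendsto 0).mono_left nhdsWithin_le_nhds).mul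
        (tendsto_exp_neg_inv_sq_rpow_div_pow m₀ (sub_pos.mpr hn))
    refine this.congr' ?_
    filter_upwards [self_mem_nhdsWithin] with t (ht : 0 < t)
    simp only [flatMonomial, Real.rpow_sub (Real.exp_pos _)]
    field_simp

lemma eventually_flatMonomial_div_le (m₀ : ℕ) (n₀ : ℝ) {r δ : ℝ} (hr0 : 0 < r) (hr1 : r ≤ 1)
    (hδ : 0 < δ) :
    ∀ᶠ t in 𝓝[>] 0, ∀ (m : ℕ) (n : ℝ), ((n = n₀ ∧ m₀ ≤ m) ∨ n₀ + δ ≤ n) →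
      flatMonomial t m n / flatMonomial t m₀ n₀ ≤ r ^ m * r ^ n / (r ^ m₀ * r ^ (n₀ + δ)) := by
  have htr : ∀ᶠ t in 𝓝[>] (0 : ℝ), t ≤ r :=
    (eventually_le_nhds hr0).filter_mono nhdsWithin_le_nhds
  have hEr : ∀ᶠ t in 𝓝[>] (0 : ℝ), Real.exp (-(t ^ 2)⁻¹) ≤ r := by
    simpa using (tendsto_exp_neg_inv_sq_rpow_div_pow 0 one_pos).eventually_le_const hr0
  have hflat := (tendsto_exp_neg_inv_sq_rpow_div_pow m₀ hδ).eventually_le_const one_pos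
  filter_upwards [self_mem_nhdsWithin, htr, hEr, hflat] with t (ht : 0 < t) htr hEr hflat m n h
  exact pow_mul_rpow_div_le ht htr (Real.exp_pos _) hEr hr1 hδ.le
    ((div_le_one (pow_pos ht _)).mp hflat) h

lemma eq_zero_of_hasSum_zero_of_tendsto_single {α ι E : Type*} [NormedAddCommGroup E]
    [CompleteSpace E] [DecidableEq ι] {l : Filter α} [l.NeBot] {f : α → ι → E} {bound : ι → ℝ}
    {i₀ : ι} {c : E} (hbound : Summable bound) (hdom : ∀ᶠ t in l, ∀ i, ‖f t i‖ ≤ bound i)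
    (hlim : ∀ i, Tendsto (f · i) l (𝓝 ((Pi.single i₀ c : ι → E) i)))
    (hsum : ∀ᶠ t in l, HasSum (f t) 0) :
    c = 0 := by
  have h := tendsto_tsum_of_dominated_convergence hbound hlim hdom
  rw [tsum_pi_single] at h
  exact tendsto_nhds_unique (h.congr' (hsum.mono fun t ht => ht.tsum_eq)) tendsto_const_nhds

theorem coeff_eq_zero_of_hasSum_flatMonomial_eq_zero {B : Set ℝ} {a : ℕ × B → ℂ} {r : ℝ}
    (hr0 : 0 < r) (hr1 : r ≤ 1)
    (hconv : Summable fun p : ℕ × B => ‖a p‖ * r ^ p.1 * r ^ (p.2 : ℝ))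
    {l : Filter ℝ} [l.NeBot] (hl : l ≤ 𝓝[>] 0)
    (hvan : ∀ᶠ t in l, HasSum (fun p : ℕ × B => a p * (flatMonomial t p.1 p.2 : ℂ)) 0)
    {p₀ : ℕ × B} {δ : ℝ} (hδ : 0 < δ)
    (hlead : ∀ p, a p ≠ 0 → ((p.2 : ℝ) = p₀.2 ∧ p₀.1 ≤ p.1) ∨ (p₀.2 : ℝ) + δ ≤ p.2) :
    a p₀ = 0 := by
  classical
  set w : ℝ → ℕ × B → ℝ := fun t p => flatMonomial t p.1 p.2 / flatMonomial t p₀.1 p₀.2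
  refine eq_zero_of_hasSum_zero_of_tendsto_single (l := l) (f := fun t p => a p * (w t p : ℂ))
    (i₀ := p₀) (hconv.mul_right (r ^ p₀.1 * r ^ ((p₀.2 : ℝ) + δ))⁻¹) ?_ (fun p => ?_) ?_
  · filter_upwards [hl (eventually_flatMonomial_div_le p₀.1 p₀.2 hr0 hr1 hδ),
      hl self_mem_nhdsWithin] with t hw (ht : 0 < t) p
    rcases eq_or_ne (a p) 0 with hp | hp
    · simp [hp]
    have hw_nonneg : 0 ≤ w t p := (div_pos (flatMonomial_pos ht _ _) (flatMonomial_pos ht _ _)).le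
    rw [norm_mul, Complex.norm_real, Real.norm_of_nonneg hw_nonneg, mul_assoc _ (r ^ p.1),
      mul_assoc, ← div_eq_mul_inv]
    exact mul_le_mul_of_nonneg_left (hw p.1 p.2 (hlead p hp)) (norm_nonneg _)
  · rcases eq_or_ne p p₀ with rfl | hp
    · refine tendsto_const_nhds.congr' ?_
      filter_upwards [hl self_mem_nhdsWithin] with t (ht : 0 < t)
      simp [w, div_self (flatMonomial_pos ht _ _).ne']
    rw [Pi.single_eq_of_ne hp]
    rcases eq_or_ne (a p) 0 with ha | ha
    · simp [ha]
    have hlt : ((p.2 : ℝ) = p₀.2 ∧ p₀.1 < p.1) ∨ (p₀.2 : ℝ) < p.2 := by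
      rcases hlead p ha with ⟨h2, h1⟩ | h
      · exact .inl ⟨h2, h1.lt_of_ne fun h => hp (Prod.ext h.symm (Subtype.ext h2))⟩
      · exact .inr (by linarith)
    simpa [w] using ((Complex.continuous_ofReal.tendsto 0).comp
      ((tendsto_flatMonomial_div hlt).mono_left hl)).const_mul (a p)
  · filter_upwards [hvan] with t ht
    simpa [w, mul_div_assoc] using ht.div_const (flatMonomial t p₀.1 p₀.2 : ℂ)

/-- Rigidity of convergent series indexed by `ℕ × B`, where `B` is a finitely generated
additive submonoid of `ℝ_{≥0}`: if the series `F(t₁,t₂) = ∑ a(m,n) t₁^m t₂^n`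
absolutely converges for some `0 < r < 1`, and `F(t, exp(−t^{−2})) = 0` for all
sufficiently small `t` in a set `T ⊆ ℝ_{>0}` whose closure contains `0`,
then all coefficients `a(m,n)` vanish. -/
theorem coeffs_eq_zero_of_vanishing_along_exp
    (B : AddSubmonoid ℝ) (hBnonneg : ∀ x ∈ B, 0 ≤ x) (hBfg : B.FG)
    (a : ℕ × B → ℂ)
    (hconv : ∃ r : ℝ, 0 < r ∧ r < 1 ∧
      Summable (fun p : ℕ × B => ‖a p‖ * r ^ p.1 * r ^ (p.2 : ℝ)))
    (hvan : ∃ T : Set ℝ, T ⊆ Set.Ioi (0 : ℝ) ∧ (0 : ℝ) ∈ closure T ∧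
      ∃ ε : ℝ, 0 < ε ∧ ∀ t ∈ T, t < ε →
        HasSum (fun p : ℕ × B =>
          a p * ((t ^ p.1 * Real.exp (-(t ^ 2)⁻¹) ^ (p.2 : ℝ) : ℝ) : ℂ)) 0) :
    ∀ p : ℕ × B, a p = 0 := by
  obtain ⟨r, hr0, hr1, hsum⟩ := hconv
  obtain ⟨T, hTpos, hT0, ε, hε, hvan⟩ := hvan
  by_contra! ha
  have hfin := AddSubmonoid.finite_inter_Iic_of_fg hBnonneg hBfg
  obtain ⟨p₀, hp₀, hlead⟩ := exists_mem_forall_snd_lt_or_fst_le hfin (S := {p | a p ≠ 0}) ha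
  obtain ⟨δ, hδ, hgap⟩ := exists_add_le_of_lt_of_finite_inter_Iic hfin p₀.2
  have : (𝓝[T] (0 : ℝ)).NeBot := mem_closure_iff_nhdsWithin_neBot.mp hT0
  refine hp₀ (coeff_eq_zero_of_hasSum_flatMonomial_eq_zero hr0 hr1.le hsum
    (nhdsWithin_mono 0 hTpos) ?_ hδ fun p hp => (hlead p hp).imp_right (hgap _ p.2.2))
  filter_upwards [self_mem_nhdsWithin, nhdsWithin_le_nhds (Iio_mem_nhds hε)] with t htT htε
  exact hvan t htT htε
end

section
/- For every integer c ≥ 1, the map from (ℝ_{≥0})^c to ℝ^{c−1} × ℝ_{≥0} sending (t₁, t₂, …, t_c) to (t₂ − t₁, t₃ − t₁, …, t_c − t₁, t₁·t₂⋯t_c) is a homeomorphism; that is, it is bijective, continuous, and its inverse is continuous. (In particular, via this homeomorphism the product map (ℝ_{≥0})^c → ℝ_{≥0}, (t₁,…,t_c) ↦ t₁⋯t_c, is identified with the projection ℝ^{c−1} × ℝ_{≥0} → ℝ_{≥0}.) -/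
/-!
Write `t = t 0 + e` with `e = (0, t₂ - t₁, …, t_c - t₁)`; the map becomes
`(t 0, e) ↦ (e, ∏ₖ (t 0 + e k))`. For fixed `e`, the function `x ↦ ∏ₖ (x + e k)` increases
strictly from `0` to `∞` on the half-line where all factors are nonnegative, which gives
bijectivity. The map is also proper: bounds on the differences and on the product bound the
smallest coordinate, hence all of them. A continuous proper bijection is a homeomorphism.
-/

open scoped NNReal

section ShiftedProduct

variable {ι : Type*} [Fintype ι] [Nonempty ι] (e : ι → ℝ)

theorem strictMonoOn_prod_add :
    StrictMonoOn (fun x => ∏ i, (x + e i)) {x | ∀ i, 0 ≤ x + e i} := by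
  intro x hx y _ hxy
  have hlt : ∀ i, x + e i < y + e i := fun i => by linarith
  by_cases hpos : ∀ i, 0 < x + e i
  · exact Finset.prod_lt_prod_of_nonempty (fun i _ => hpos i) (fun i _ => hlt i)
      Finset.univ_nonempty
  · obtain ⟨j, hj⟩ := not_forall.1 hpos
    have hzero : x + e j = 0 := le_antisymm (not_lt.1 hj) (hx j)
    show ∏ i, (x + e i) < ∏ i, (y + e i)
    rw [Finset.prod_eq_zero (Finset.mem_univ j) hzero]
    exact Finset.prod_pos fun i _ => (hx i).trans_lt (hlt i)

/-- By the intermediate value theorem: the product vanishes at `x = max_i (-e i)` and is at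
least `p` at `x = max_i (-e i) + p + 1`. -/
theorem exists_prod_add_eq {p : ℝ} (hp : 0 ≤ p) :
    ∃ x, (∀ i, 0 ≤ x + e i) ∧ ∏ i, (x + e i) = p := by
  obtain ⟨j, hj⟩ := Finite.exists_max fun i => -e i
  have hnonneg : ∀ {x}, -e j ≤ x → ∀ i, 0 ≤ x + e i := fun hx i => by linarith [hj i]
  have hlow : ∏ i, (-e j + e i) = 0 := Finset.prod_eq_zero (Finset.mem_univ j) (neg_add_cancel _)
  have hhigh : p ≤ ∏ i, (-e j + p + 1 + e i) :=
    calc p ≤ (p + 1) ^ Fintype.card ι := by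
          linarith [le_self_pow₀ (by linarith : (1 : ℝ) ≤ p + 1) (Fintype.card_ne_zero (α := ι))]
      _ = ∏ _i : ι, (p + 1) := by simp
      _ ≤ ∏ i, (-e j + p + 1 + e i) :=
          Finset.prod_le_prod (fun _ _ => by positivity) fun i _ => by linarith [hj i]
  obtain ⟨x, hx, hpx⟩ := intermediate_value_Icc (by linarith : -e j ≤ -e j + p + 1)
    (by fun_prop : Continuous fun x => ∏ i, (x + e i)).continuousOn ⟨hlow ▸ hp, hhigh⟩
  exact ⟨x, hnonneg hx.1, hpx⟩

end ShiftedProduct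

theorem exists_le_max_one_prod {ι : Type*} [Fintype ι] [Nonempty ι] (t : ι → ℝ≥0) :
    ∃ j, t j ≤ max 1 (∏ i, t i) := by
  obtain ⟨j, hj⟩ := Finite.exists_min t
  refine ⟨j, ?_⟩
  rcases le_total (t j) 1 with h | h
  · exact le_max_of_le_left h
  · refine le_max_of_le_right ?_
    calc t j ≤ t j ^ Fintype.card ι := le_self_pow₀ h Fintype.card_ne_zero
      _ ≤ ∏ i, t i := Finset.pow_card_le_prod _ _ _ fun i _ => hj i

def differencesAndProduct (n : ℕ) (t : Fin (n + 1) → ℝ≥0) : (Fin n → ℝ) × ℝ≥0 :=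
  (fun i => (t i.succ : ℝ) - t 0, ∏ i, t i)

namespace differencesAndProduct

variable {n : ℕ}

theorem continuous : Continuous (differencesAndProduct n) := by
  unfold differencesAndProduct; fun_prop

theorem coe_eq_coe_zero_add_cons (t : Fin (n + 1) → ℝ≥0) (k : Fin (n + 1)) :
    (t k : ℝ) = t 0 + Matrix.vecCons 0 (differencesAndProduct n t).1 k := by
  cases k using Fin.cases <;> simp [differencesAndProduct]

theorem coe_snd_eq_prod (t : Fin (n + 1) → ℝ≥0) :
    ((differencesAndProduct n t).2 : ℝ) =
      ∏ k, ((t 0 : ℝ) + Matrix.vecCons 0 (differencesAndProduct n t).1 k) := by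
  simp only [differencesAndProduct, NNReal.coe_prod]
  exact Finset.prod_congr rfl fun k _ => coe_eq_coe_zero_add_cons t k

theorem coe_le_of_norm_fst_le_of_snd_le {t : Fin (n + 1) → ℝ≥0} {M : ℝ} {P : ℝ≥0}
    (hd : ‖(differencesAndProduct n t).1‖ ≤ M) (hp : (differencesAndProduct n t).2 ≤ P)
    (k : Fin (n + 1)) : (t k : ℝ) ≤ (max 1 P : ℝ≥0) + 2 * M := by
  set e : Fin (n + 1) → ℝ := Matrix.vecCons 0 (differencesAndProduct n t).1
  have he : ∀ k, |e k| ≤ M := Fin.cases (by simpa [e] using (norm_nonneg _).trans hd)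
    fun i => by simpa [e] using (norm_le_pi_norm _ i).trans hd
  obtain ⟨j, hj⟩ := exists_le_max_one_prod t
  have htj : (t j : ℝ) ≤ (max 1 P : ℝ≥0) := by exact_mod_cast hj.trans (max_le_max le_rfl hp)
  rw [coe_eq_coe_zero_add_cons t k]
  rw [coe_eq_coe_zero_add_cons t j] at htj
  linarith [abs_le.1 (he k), abs_le.1 (he j)]

theorem isProperMap : IsProperMap (differencesAndProduct n) := by
  refine isProperMap_iff_isCompact_preimage.2 ⟨continuous, fun K hK => ?_⟩
  obtain ⟨M, hM⟩ := hK.exists_bound_of_continuousOn continuous_fst.continuousOn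
  obtain ⟨P, hP⟩ := hK.bddAbove_image continuous_snd.continuousOn
  have hbox : differencesAndProduct n ⁻¹' K ⊆
      Set.Icc 0 fun _ => Real.toNNReal ((max 1 P : ℝ≥0) + 2 * M) := fun t ht =>
    ⟨fun _ => zero_le, fun k => NNReal.le_toNNReal_of_coe_le
      (coe_le_of_norm_fst_le_of_snd_le (hM _ ht) (hP ⟨_, ht, rfl⟩) k)⟩
  exact isCompact_Icc.of_isClosed_subset (hK.isClosed.preimage continuous) hbox

theorem injective : Function.Injective (differencesAndProduct n) := by
  intro t s hts
  have hnonneg : ∀ u : Fin (n + 1) → ℝ≥0, ∀ k,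
      0 ≤ (u 0 : ℝ) + Matrix.vecCons 0 (differencesAndProduct n u).1 k :=
    fun u k => coe_eq_coe_zero_add_cons u k ▸ (u k).2
  have h0 : (t 0 : ℝ) = s 0 :=
    (strictMonoOn_prod_add _).injOn (hnonneg t) (hts ▸ hnonneg s) <| by
      rw [← coe_snd_eq_prod, hts, coe_snd_eq_prod]
  funext k
  apply NNReal.coe_injective
  rw [coe_eq_coe_zero_add_cons t k, coe_eq_coe_zero_add_cons s k, h0, hts]

theorem surjective : Function.Surjective (differencesAndProduct n) := by
  rintro ⟨d, p⟩
  set e : Fin (n + 1) → ℝ := Matrix.vecCons 0 d with he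
  obtain ⟨x, hx, hxp⟩ := exists_prod_add_eq e p.2
  have hcoe : ∀ k, ((x + e k).toNNReal : ℝ) = x + e k := fun k => Real.coe_toNNReal _ (hx k)
  refine ⟨fun k => (x + e k).toNNReal, Prod.ext (funext fun i => ?_) (NNReal.coe_injective ?_)⟩
  · simp only [differencesAndProduct, hcoe]
    simp [he]
  · simp [differencesAndProduct, hcoe, hxp]

theorem isHomeomorph : IsHomeomorph (differencesAndProduct n) :=
  isHomeomorph_iff_continuous_isClosedMap_bijective.2
    ⟨continuous, isProperMap.isClosedMap, injective, surjective⟩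

end differencesAndProduct

/-- For `c ≥ 1`, the map `(ℝ_{≥0})^c → ℝ^{c-1} × ℝ_{≥0}` sending
`(t₁, …, t_c)` to `(t₂ − t₁, …, t_c − t₁, t₁ t₂ ⋯ t_c)` is a homeomorphism.
In particular it identifies the product map `(t₁,…,t_c) ↦ t₁⋯t_c` with the
projection `ℝ^{c-1} × ℝ_{≥0} → ℝ_{≥0}`. -/
theorem isHomeomorph_differences_and_product (c : ℕ) (hc : 1 ≤ c) :
    IsHomeomorph (fun t : Fin c → NNReal =>
      ((fun i : Fin (c - 1) => ((t ⟨i.1 + 1, by omega⟩ : ℝ) - (t ⟨0, by omega⟩ : ℝ)),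
        ∏ i : Fin c, t i) : (Fin (c - 1) → ℝ) × NNReal)) := by
  obtain ⟨n, rfl⟩ := Nat.exists_eq_add_of_le' hc
  exact differencesAndProduct.isHomeomorph
end

section
/- Let H be a finite-dimensional complex vector space, let σ : H → H be a conjugate-linear involution (σ(λx) = conj(λ)·σ(x) and σ∘σ = id), and let B : H × H → ℂ be a nondegenerate alternating ℂ-bilinear form. Let V ⊆ H be a complex subspace such that the annihilator {x ∈ H : B(v, x) = 0 for all v ∈ V} equals V, and such that for every nonzero v ∈ V the complex number i·B(v, σ(v)) is a positive real number. Then V ∩ σ(V) = 0 and V + σ(V) = H; equivalently, the map V × V → H sending (u, v) to u + σ(v) is bijective. -/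
instance : RingHomSurjective (starRingEnd ℂ) :=
  ⟨fun z => ⟨star z, by rw [starRingEnd_apply, star_star]⟩⟩

/-! A Lagrangian `V` of a nondegenerate form on `H` has half the dimension of `H`, and so does
`σ(V)`. Positivity of `i·B(v, σv)` forces `V ∩ σ(V) = 0`, since `B` vanishes on `V × V`;
two complementary-dimensional subspaces meeting in `0` span `H`. -/

open Module

theorem Submodule.finrank_map_of_injective {K M : Type*} [Field K] [AddCommGroup M] [Module K M]
    {τ τ' : K →+* K} [RingHomInvPair τ τ'] [RingHomInvPair τ' τ]
    (f : M →ₛₗ[τ] M) (hf : Function.Injective f) (V : Submodule K M) :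
    finrank K (V.map f) = finrank K V := by
  let e := V.equivMapOfInjective f hf
  have hrank : Module.rank K V = Module.rank K (V.map f) :=
    rank_eq_of_equiv_equiv τ e.toAddEquiv ⟨τ.injective, RingHomSurjective.is_surjective⟩
      e.map_smulₛₗ
  simp only [finrank, hrank]

theorem LinearMap.BilinForm.two_mul_finrank_eq_of_orthogonal_eq_self {K H : Type*} [Field K]
    [AddCommGroup H] [Module K H] [FiniteDimensional K H] {B : LinearMap.BilinForm K H}
    (hB : B.Nondegenerate) {V : Submodule K H} (hV : B.orthogonal V = V) :
    2 * finrank K V = finrank K H := by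
  have h := B.finrank_orthogonal hB V
  rw [hV] at h
  have := V.finrank_le
  omega

theorem Submodule.inf_map_eq_bot_of_isotropic {R M : Type*} [CommRing R] [AddCommGroup M]
    [Module R M] {τ : R →+* R} [RingHomSurjective τ] (σ : M →ₛₗ[τ] M)
    (hσ : Function.Involutive σ) (B : M →ₗ[R] M →ₗ[R] R) {V : Submodule R M}
    (hiso : ∀ v ∈ V, ∀ w ∈ V, B v w = 0) (hne : ∀ v ∈ V, v ≠ 0 → B v (σ v) ≠ 0) :
    V ⊓ V.map σ = ⊥ := by
  refine (Submodule.eq_bot_iff _).mpr ?_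
  rintro _ ⟨hσv, v, hv, rfl⟩
  by_contra h
  exact hne (σ v) hσv h (hiso _ hσv _ (by rwa [hσ v]))

/-- Let `H` be a finite-dimensional complex vector space, `σ` a conjugate-linear
involution of `H`, and `B` a nondegenerate alternating bilinear form on `H`.
If `V ⊆ H` is a subspace which is its own annihilator for `B` and such that
`i·B(v, σv) > 0` for every nonzero `v ∈ V`, then `V ∩ σ(V) = 0` and `V + σ(V) = H`. -/
theorem inf_conj_eq_bot_and_sup_conj_eq_top_of_positivity
    (H : Type*) [AddCommGroup H] [Module ℂ H] [FiniteDimensional ℂ H]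
    (σ : H →ₛₗ[starRingEnd ℂ] H) (hσ : ∀ x : H, σ (σ x) = x)
    (B : H →ₗ[ℂ] H →ₗ[ℂ] ℂ)
    (halt : ∀ x : H, B x x = 0)
    (hnd : ∀ x : H, (∀ y : H, B x y = 0) → x = 0)
    (V : Submodule ℂ H)
    (hann : ∀ x : H, (∀ v ∈ V, B v x = 0) ↔ x ∈ V)
    (hpos : ∀ v ∈ V, v ≠ (0 : H) → ∃ r : ℝ, 0 < r ∧ Complex.I * B v (σ v) = (r : ℂ)) :
    V ⊓ Submodule.map σ V = ⊥ ∧ V ⊔ Submodule.map σ V = ⊤ := by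
  have hinv : Function.Involutive σ := hσ
  have hnondeg : B.Nondegenerate :=
    (LinearMap.IsAlt.isRefl halt).nondegenerate_iff_separatingLeft.mpr hnd
  have hlagr : LinearMap.BilinForm.orthogonal B V = V := Submodule.ext hann
  have hne : ∀ v ∈ V, v ≠ 0 → B v (σ v) ≠ 0 := by
    intro v hv hv0 hB
    obtain ⟨r, hr, hIr⟩ := hpos v hv hv0
    rw [hB, mul_zero] at hIr
    exact hr.ne' (mod_cast hIr.symm)
  have hinf : V ⊓ V.map σ = ⊥ :=
    V.inf_map_eq_bot_of_isotropic σ hinv B (fun v hv w hw => (hann w).mpr hw v hv) hne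
  refine ⟨hinf, Submodule.eq_top_of_disjoint _ _ ?_ (disjoint_iff.mpr hinf)⟩
  rw [V.finrank_map_of_injective σ hinv.injective,
    ← LinearMap.BilinForm.two_mul_finrank_eq_of_orthogonal_eq_self hnondeg hlagr, two_mul]
end

section
/- Let f : ℝ → ℝ be a continuous function with f(x+1) = f(x) for all x ∈ ℝ, and let n ≥ 0 be an integer. Define F(x) = ∫₀ˣ f(u)·uⁿ du and, for each integer r with 0 ≤ r ≤ n, define g_r(x) = ∫₀¹ f(x+θ)·θ^r dθ. Then: (1) for all x ∈ ℝ, F(x+1) − F(x) = ∑_{r=0}^{n} C(n,r) · x^{n−r} · g_r(x), where C(n,r) is the binomial coefficient; and (2) if P₁, …, P_{n+1} are real polynomials such that P_m(x+1) − P_m(x) = x^{m−1} for all x ∈ ℝ and all 1 ≤ m ≤ n+1, then the function h(x) = F(x) − ∑_{r=0}^{n} C(n,r) · g_r(x) · P_{n+1−r}(x) is periodic of period 1, i.e. h(x+1) = h(x) for all x ∈ ℝ. -/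
open MeasureTheory intervalIntegral

/-- Let `f : ℝ → ℝ` be continuous with period `1`, let `n ≥ 0`, and set
`F(x) = ∫₀ˣ f(u) uⁿ du` and `g_r(x) = ∫₀¹ f(x+θ) θ^r dθ`.  Then
(1) `F(x+1) − F(x) = ∑_{r=0}^n C(n,r) x^{n−r} g_r(x)`; and
(2) if `P₁, …, P_{n+1}` are polynomials with `P_m(x+1) − P_m(x) = x^{m−1}`, then
`h(x) = F(x) − ∑_{r=0}^n C(n,r) g_r(x) P_{n+1−r}(x)` satisfies `h(x+1) = h(x)`. -/
theorem periodic_integral_difference_formula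
    (f : ℝ → ℝ) (hf : Continuous f) (hper : ∀ x : ℝ, f (x + 1) = f x) (n : ℕ) :
    (∀ x : ℝ,
      (∫ u in (0 : ℝ)..(x + 1), f u * u ^ n) - (∫ u in (0 : ℝ)..x, f u * u ^ n)
        = ∑ r ∈ Finset.range (n + 1),
            (n.choose r : ℝ) * x ^ (n - r) * ∫ θ in (0 : ℝ)..1, f (x + θ) * θ ^ r) ∧
    (∀ P : ℕ → Polynomial ℝ,
      (∀ m : ℕ, 1 ≤ m → m ≤ n + 1 →
        ∀ x : ℝ, (P m).eval (x + 1) - (P m).eval x = x ^ (m - 1)) →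
      ∀ x : ℝ,
        ((∫ u in (0 : ℝ)..(x + 1), f u * u ^ n)
            - ∑ r ∈ Finset.range (n + 1),
                (n.choose r : ℝ) * (∫ θ in (0 : ℝ)..1, f ((x + 1) + θ) * θ ^ r)
                  * (P (n + 1 - r)).eval (x + 1))
          = (∫ u in (0 : ℝ)..x, f u * u ^ n)
            - ∑ r ∈ Finset.range (n + 1),
                (n.choose r : ℝ) * (∫ θ in (0 : ℝ)..1, f (x + θ) * θ ^ r)
                  * (P (n + 1 - r)).eval x) := by

  have hcont : ∀ m : ℕ, Continuous (fun u : ℝ => f u * u ^ m) := fun m =>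
    hf.mul (continuous_pow m)
  -- periodicity of g_r
  have hg : ∀ (r : ℕ) (x : ℝ),
      (∫ θ in (0 : ℝ)..1, f ((x + 1) + θ) * θ ^ r)
        = ∫ θ in (0 : ℝ)..1, f (x + θ) * θ ^ r := by
    intro r x
    apply intervalIntegral.integral_congr
    intro θ _
    show f (x + 1 + θ) * θ ^ r = f (x + θ) * θ ^ r
    have : x + 1 + θ = (x + θ) + 1 := by ring
    rw [this, hper]
  have key : ∀ x : ℝ,
      (∫ u in (0 : ℝ)..(x + 1), f u * u ^ n) - (∫ u in (0 : ℝ)..x, f u * u ^ n)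
        = ∑ r ∈ Finset.range (n + 1),
            (n.choose r : ℝ) * x ^ (n - r) * ∫ θ in (0 : ℝ)..1, f (x + θ) * θ ^ r := by
    intro x
    have h1 : (∫ u in (0 : ℝ)..(x + 1), f u * u ^ n) - (∫ u in (0 : ℝ)..x, f u * u ^ n)
        = ∫ u in x..(x + 1), f u * u ^ n := by
      rw [← intervalIntegral.integral_add_adjacent_intervals
        ((hcont n).intervalIntegrable 0 x) ((hcont n).intervalIntegrable x (x + 1))]
      ring
    have h2 : (∫ u in x..(x + 1), f u * u ^ n)
        = ∫ θ in (0 : ℝ)..1, f (x + θ) * (x + θ) ^ n := by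
      have := intervalIntegral.integral_comp_add_left (a := (0:ℝ)) (b := 1)
        (fun u : ℝ => f u * u ^ n) x
      simp only [add_zero] at this
      rw [this]
    have h3 : ∀ θ : ℝ, f (x + θ) * (x + θ) ^ n
        = ∑ r ∈ Finset.range (n + 1),
            (n.choose r : ℝ) * x ^ (n - r) * (f (x + θ) * θ ^ r) := by
      intro θ
      rw [show x + θ = θ + x by ring, add_pow, Finset.mul_sum]
      apply Finset.sum_congr rfl
      intro r hr
      ring
    rw [h1, h2]
    calc (∫ θ in (0 : ℝ)..1, f (x + θ) * (x + θ) ^ n)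
        = ∫ θ in (0 : ℝ)..1, ∑ r ∈ Finset.range (n + 1),
            (n.choose r : ℝ) * x ^ (n - r) * (f (x + θ) * θ ^ r) := by
          apply intervalIntegral.integral_congr; intro θ _; exact h3 θ
      _ = ∑ r ∈ Finset.range (n + 1),
            ∫ θ in (0 : ℝ)..1, (n.choose r : ℝ) * x ^ (n - r) * (f (x + θ) * θ ^ r) := by
          apply intervalIntegral.integral_finset_sum
          intro r _
          exact (Continuous.intervalIntegrable (by
            exact (continuous_const.mul
              ((hf.comp (continuous_const.add continuous_id)).mul (continuous_pow r)))) 0 1)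
      _ = ∑ r ∈ Finset.range (n + 1),
            (n.choose r : ℝ) * x ^ (n - r) * ∫ θ in (0 : ℝ)..1, f (x + θ) * θ ^ r := by
          apply Finset.sum_congr rfl
          intro r _
          exact intervalIntegral.integral_const_mul _ _
  refine ⟨key, ?_⟩
  intro P hP x
  have hFdiff := key x
  have hsum : ∑ r ∈ Finset.range (n + 1),
      (n.choose r : ℝ) * (∫ θ in (0 : ℝ)..1, f ((x + 1) + θ) * θ ^ r)
        * (P (n + 1 - r)).eval (x + 1)
      - ∑ r ∈ Finset.range (n + 1),
      (n.choose r : ℝ) * (∫ θ in (0 : ℝ)..1, f (x + θ) * θ ^ r)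
        * (P (n + 1 - r)).eval x
      = ∑ r ∈ Finset.range (n + 1),
          (n.choose r : ℝ) * x ^ (n - r) * ∫ θ in (0 : ℝ)..1, f (x + θ) * θ ^ r := by
    rw [← Finset.sum_sub_distrib]
    apply Finset.sum_congr rfl
    intro r hr
    have hr' : r ≤ n := Nat.lt_succ_iff.mp (Finset.mem_range.mp hr)
    have h1 : 1 ≤ n + 1 - r := by omega
    have h2 : n + 1 - r ≤ n + 1 := by omega
    have hPeval := hP (n + 1 - r) h1 h2 x
    have hidx : n + 1 - r - 1 = n - r := by omega
    rw [hidx] at hPeval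
    rw [hg r x]
    have : (n.choose r : ℝ) * (∫ θ in (0 : ℝ)..1, f (x + θ) * θ ^ r)
          * (P (n + 1 - r)).eval (x + 1)
        - (n.choose r : ℝ) * (∫ θ in (0 : ℝ)..1, f (x + θ) * θ ^ r)
          * (P (n + 1 - r)).eval x
        = (n.choose r : ℝ) * (∫ θ in (0 : ℝ)..1, f (x + θ) * θ ^ r)
          * ((P (n + 1 - r)).eval (x + 1) - (P (n + 1 - r)).eval x) := by ring
    rw [this, hPeval]; ring
  linarith [hFdiff, hsum]
end
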